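/- arXiv:math/0602547 — 7 statements merged into one kernel-verified Lean document; each statement's English description precedes it below -/
import Mathlib

section
/- Fix H ∈ (1/2, 1). Define β(y) = ∫₀¹ (1-x)^{2H-1}(x+y)^{-2H} dx for y > 0. Then for 0 < r < u, H(2H-1)·∫₀^u ∫_r^u θ^{-2H} |σ-θ|^{2H-2} dθ dσ = H·log(u/r) + H·β(r/(u-r)). -/
open MeasureTheory Set intervalIntegral Real

namespace FbmAux

lemma integral_rpow_zero {p : ℝ} (hp : -1 < p) (a : ℝ) :
    ∫ t in (0:ℝ)..a, t ^ p = a ^ (p+1) / (p+1) := by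
  rw [integral_rpow (Or.inl hp), Real.zero_rpow (by linarith), sub_zero]

lemma integral_sub_left {p : ℝ} (hp : -1 < p) (a b : ℝ) :
    ∫ σ in a..b, (b - σ) ^ p = (b - a) ^ (p+1) / (p+1) := by
  rw [intervalIntegral.integral_comp_sub_left (fun t => t ^ p) b, sub_self]
  exact integral_rpow_zero hp _

lemma integral_sub_right {p : ℝ} (hp : -1 < p) (a b : ℝ) :
    ∫ σ in a..b, (σ - a) ^ p = (b - a) ^ (p+1) / (p+1) := by
  rw [intervalIntegral.integral_comp_sub_right (fun t => t ^ p) a, sub_self]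
  exact integral_rpow_zero hp _

/-- `x ↦ |x - c| ^ p` is interval integrable for `-1 < p`. -/
lemma ii_abs {p : ℝ} (hp : -1 < p) (c a b : ℝ) :
    IntervalIntegrable (fun x => |x - c| ^ p) volume a b := by
  have key : ∀ d : ℝ, IntervalIntegrable (fun x => |x - c| ^ p) volume d c := by
    intro d
    rcases le_total d c with h | h
    · have h1 : IntervalIntegrable (fun x => (c - x) ^ p) volume d c := by
        have := (intervalIntegral.intervalIntegrable_rpow' hp (a := 0) (b := c - d)).comp_sub_left c
        simpa using this.symm
      apply h1.congr
      intro x hx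
      dsimp only
      rw [uIoc_of_le h] at hx
      rw [abs_of_nonpos (by linarith [hx.2]), neg_sub]
    · have h1 : IntervalIntegrable (fun x => (x - c) ^ p) volume d c := by
        have := ((intervalIntegral.intervalIntegrable_rpow' hp (a := 0) (b := d - c)).comp_sub_right c).symm
        simpa using this
      apply h1.congr
      intro x hx
      dsimp only
      rw [Set.uIoc_comm, uIoc_of_le h] at hx
      rw [abs_of_nonneg (by linarith [hx.1])]
  exact (key a).trans ((key b).symm)


lemma ii_abs' {p : ℝ} (hp : -1 < p) (c a b : ℝ) :
    IntervalIntegrable (fun x => |c - x| ^ p) volume a b := by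
  have : (fun x => |c - x| ^ p) = fun x => |x - c| ^ p := by
    funext x; rw [abs_sub_comm]
  rw [this]; exact ii_abs hp c a b

lemma integral_abs_sub {p : ℝ} (hp : -1 < p) {θ u : ℝ} (h0 : 0 ≤ θ) (hθu : θ ≤ u) :
    ∫ σ in (0:ℝ)..u, |σ - θ| ^ p = (θ ^ (p+1) + (u - θ) ^ (p+1)) / (p+1) := by
  rw [← integral_add_adjacent_intervals (ii_abs hp θ 0 θ) (ii_abs hp θ θ u)]
  have h1 : (∫ σ in (0:ℝ)..θ, |σ - θ| ^ p) = θ ^ (p+1) / (p+1) := by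
    have he : (∫ σ in (0:ℝ)..θ, |σ - θ| ^ p) = ∫ σ in (0:ℝ)..θ, (θ - σ) ^ p := by
      apply intervalIntegral.integral_congr
      intro x hx
      rw [uIcc_of_le h0] at hx
      show |x - θ| ^ p = (θ - x) ^ p
      rw [abs_of_nonpos (by linarith [hx.2]), neg_sub]
    rw [he, integral_sub_left hp, sub_zero]
  have h2 : (∫ σ in θ..u, |σ - θ| ^ p) = (u - θ) ^ (p+1) / (p+1) := by
    have he : (∫ σ in θ..u, |σ - θ| ^ p) = ∫ σ in θ..u, (σ - θ) ^ p := by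
      apply intervalIntegral.integral_congr
      intro x hx
      rw [uIcc_of_le hθu] at hx
      show |x - θ| ^ p = (x - θ) ^ p
      rw [abs_of_nonneg (by linarith [hx.1])]
    rw [he, integral_sub_right hp]
  rw [h1, h2]; ring

lemma integral_abs_around {p : ℝ} (hp : -1 < p) {u : ℝ} (hu : 0 ≤ u) (σ : ℝ) :
    ∫ θ in (σ-u)..(σ+u), |σ - θ| ^ p = 2 * (u ^ (p+1) / (p+1)) := by
  rw [← integral_add_adjacent_intervals (b := σ) (ii_abs' hp σ _ _) (ii_abs' hp σ _ _)]
  have h1 : (∫ θ in (σ-u)..σ, |σ - θ| ^ p) = u ^ (p+1) / (p+1) := by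
    have he : (∫ θ in (σ-u)..σ, |σ - θ| ^ p) = ∫ θ in (σ-u)..σ, (σ - θ) ^ p := by
      apply intervalIntegral.integral_congr
      intro x hx
      rw [uIcc_of_le (by linarith : σ - u ≤ σ)] at hx
      show |σ - x| ^ p = (σ - x) ^ p
      rw [abs_of_nonneg (by linarith [hx.2])]
    rw [he, integral_sub_left hp]
    norm_num
  have h2 : (∫ θ in σ..(σ+u), |σ - θ| ^ p) = u ^ (p+1) / (p+1) := by
    have he : (∫ θ in σ..(σ+u), |σ - θ| ^ p) = ∫ θ in σ..(σ+u), (θ - σ) ^ p := by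
      apply intervalIntegral.integral_congr
      intro x hx
      rw [uIcc_of_le (by linarith : σ ≤ σ + u)] at hx
      show |σ - x| ^ p = (x - σ) ^ p
      rw [abs_sub_comm, abs_of_nonneg (by linarith [hx.1])]
    rw [he, integral_sub_right hp]
    norm_num
  rw [h1, h2]; ring

lemma bound_aux {p : ℝ} (hp : -1 < p) {u r σ : ℝ} (hr : 0 < r) (hru : r ≤ u)
    (hσ : σ ∈ Ioc (0:ℝ) u) :
    ∫ θ in Ioc r u, |σ - θ| ^ p ≤ 2 * (u ^ (p+1) / (p+1)) := by
  have hu : (0:ℝ) ≤ u := le_trans hr.le hru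
  have hsub : Ioc r u ⊆ Ioc (σ - u) (σ + u) :=
    Ioc_subset_Ioc (by linarith [hσ.2]) (by linarith [hσ.1])
  have hfi : IntegrableOn (fun θ => |σ - θ| ^ p) (Ioc (σ - u) (σ + u)) volume :=
    (intervalIntegrable_iff_integrableOn_Ioc_of_le (by linarith)).mp (ii_abs' hp σ _ _)
  calc ∫ θ in Ioc r u, |σ - θ| ^ p
      ≤ ∫ θ in Ioc (σ - u) (σ + u), |σ - θ| ^ p := by
        apply setIntegral_mono_set hfi
        · filter_upwards with θ using Real.rpow_nonneg (abs_nonneg _) _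
        · exact Filter.Eventually.of_forall hsub
    _ = 2 * (u ^ (p+1) / (p+1)) := by
        rw [← intervalIntegral.integral_of_le (by linarith)]
        exact integral_abs_around hp hu σ


lemma integrable_kernel {H r u : ℝ} (hH1 : 1/2 < H) (hH2 : H < 1) (hr : 0 < r) (hru : r < u) :
    Integrable (Function.uncurry fun σ θ : ℝ => θ ^ (-(2*H)) * |σ - θ| ^ (2*H-2))
      (((volume : Measure ℝ).restrict (Ioc 0 u)).prod
        ((volume : Measure ℝ).restrict (Ioc r u))) := by
  have hu : (0:ℝ) < u := lt_trans hr hru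
  have hp : (-1:ℝ) < 2*H - 2 := by linarith
  have hmeas0 : Measurable (Function.uncurry fun σ θ : ℝ => |σ - θ| ^ (2*H-2)) := by
    fun_prop
  have habs : Integrable (Function.uncurry fun σ θ : ℝ => |σ - θ| ^ (2*H-2))
      (((volume : Measure ℝ).restrict (Ioc 0 u)).prod
        ((volume : Measure ℝ).restrict (Ioc r u))) := by
    rw [integrable_prod_iff hmeas0.aestronglyMeasurable]
    constructor
    · apply Filter.Eventually.of_forall
      intro σ
      exact (intervalIntegrable_iff_integrableOn_Ioc_of_le hru.le).mp (ii_abs' hp σ r u)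
    · apply Integrable.mono' (g := fun _ : ℝ => 2 * (u ^ (2*H-2+1) / (2*H-2+1)))
      · exact integrableOn_const measure_Ioc_lt_top.ne
      · exact hmeas0.aestronglyMeasurable.norm.integral_prod_right'
      · filter_upwards [ae_restrict_mem measurableSet_Ioc] with σ hσ
        have hnn : ∀ θ : ℝ, (0:ℝ) ≤ |σ - θ| ^ (2*H-2) :=
          fun θ => Real.rpow_nonneg (abs_nonneg _) _
        have h0 : (fun θ : ℝ => ‖(|σ - θ| ^ (2*H-2) : ℝ)‖) = fun θ => |σ - θ| ^ (2*H-2) :=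
          funext fun θ => Real.norm_of_nonneg (hnn θ)
        simp only [Function.uncurry_apply_pair]
        rw [h0, Real.norm_of_nonneg (integral_nonneg fun θ => hnn θ)]
        exact bound_aux hp hr hru.le hσ
  apply (habs.const_mul (r ^ (-(2*H)))).mono'
  · apply Measurable.aestronglyMeasurable
    fun_prop
  · have hae : ∀ᵐ z : ℝ × ℝ ∂(((volume : Measure ℝ).restrict (Ioc 0 u)).prod
        ((volume : Measure ℝ).restrict (Ioc r u))), z ∈ Ioc (0:ℝ) u ×ˢ Ioc r u := by
      rw [Measure.prod_restrict]
      exact ae_restrict_mem (measurableSet_Ioc.prod measurableSet_Ioc)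
    filter_upwards [hae] with z hz
    have hz2 : r < z.2 := hz.2.1
    have hz2' : (0:ℝ) < z.2 := lt_trans hr hz2
    simp only [Function.uncurry_apply_pair, Function.uncurry]
    rw [Real.norm_of_nonneg (mul_nonneg (Real.rpow_nonneg hz2'.le _)
      (Real.rpow_nonneg (abs_nonneg _) _))]
    apply mul_le_mul_of_nonneg_right _ (Real.rpow_nonneg (abs_nonneg _) _)
    exact Real.rpow_le_rpow_of_nonpos hr hz2.le (by linarith)

end FbmAux

/-- For `H ∈ (1/2,1)` and `0 < r < u`,
`H(2H-1) ∫₀^u ∫_r^u θ^{-2H} |σ-θ|^{2H-2} dθ dσ = H log(u/r) + H β(r/(u-r))`,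
where `β(y) = ∫₀¹ (1-x)^{2H-1}(x+y)^{-2H} dx`. -/
theorem fbm_double_integral_identity
    (H r u : ℝ) (hH : H ∈ Set.Ioo (1/2 : ℝ) 1) (hr : 0 < r) (hru : r < u) :
    H * (2*H - 1) *
        (∫ σ in (0:ℝ)..u, ∫ θ in r..u, θ ^ (-(2*H)) * |σ - θ| ^ (2*H - 2))
      = H * Real.log (u / r)
        + H * ∫ x in (0:ℝ)..1, (1 - x) ^ (2*H - 1) * (x + r/(u - r)) ^ (-(2*H)) := by
  obtain ⟨hH1, hH2⟩ := hH
  have hu : (0:ℝ) < u := lt_trans hr hru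
  have hur : (0:ℝ) < u - r := by linarith
  have hp : (-1:ℝ) < 2*H - 2 := by linarith
  have hp1 : (0:ℝ) < 2*H - 1 := by linarith
  have swap : (∫ σ in (0:ℝ)..u, ∫ θ in r..u, θ ^ (-(2*H)) * |σ - θ| ^ (2*H - 2))
      = ∫ θ in Ioc r u, ∫ σ in Ioc (0:ℝ) u, θ ^ (-(2*H)) * |σ - θ| ^ (2*H - 2) := by
    rw [intervalIntegral.integral_of_le hu.le]
    simp_rw [intervalIntegral.integral_of_le hru.le]
    exact integral_integral_swap (FbmAux.integrable_kernel hH1 hH2 hr hru)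
  rw [swap]
  have step1 : (∫ θ in Ioc r u, ∫ σ in Ioc (0:ℝ) u, θ ^ (-(2*H)) * |σ - θ| ^ (2*H - 2))
      = ∫ θ in Ioc r u, (1/(2*H-1)) * (θ⁻¹ + θ ^ (-(2*H)) * (u - θ) ^ (2*H-1)) := by
    apply setIntegral_congr_fun measurableSet_Ioc
    intro θ hθ
    have hθ0 : (0:ℝ) < θ := lt_trans hr hθ.1
    show (∫ σ in Ioc (0:ℝ) u, θ ^ (-(2*H)) * |σ - θ| ^ (2*H - 2))
        = (1/(2*H-1)) * (θ⁻¹ + θ ^ (-(2*H)) * (u - θ) ^ (2*H-1))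
    rw [MeasureTheory.integral_const_mul, ← intervalIntegral.integral_of_le hu.le,
      FbmAux.integral_abs_sub hp hθ0.le hθ.2]
    have e1 : 2*H - 2 + 1 = 2*H - 1 := by ring
    rw [e1]
    have e2 : θ ^ (-(2*H)) * θ ^ (2*H-1) = θ⁻¹ := by
      rw [← Real.rpow_add hθ0]
      have : -(2*H) + (2*H-1) = -1 := by ring
      rw [this, Real.rpow_neg_one]
    have e3 : θ ^ (-(2*H)) * ((θ ^ (2*H-1) + (u - θ) ^ (2*H-1)) / (2*H-1))
        = (1/(2*H-1)) * (θ ^ (-(2*H)) * θ ^ (2*H-1) + θ ^ (-(2*H)) * (u - θ) ^ (2*H-1)) := by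
      ring
    rw [e3, e2]
  rw [step1, ← intervalIntegral.integral_of_le hru.le]
  have i1 : IntervalIntegrable (fun θ : ℝ => θ⁻¹) volume r u := by
    apply intervalIntegrable_inv
    · intro x hx
      rw [uIcc_of_le hru.le] at hx
      exact ne_of_gt (lt_of_lt_of_le hr hx.1)
    · exact continuousOn_id
  have i2 : IntervalIntegrable (fun θ : ℝ => θ ^ (-(2*H)) * (u - θ) ^ (2*H-1)) volume r u := by
    apply ContinuousOn.intervalIntegrable
    apply ContinuousOn.mul
    · apply ContinuousOn.rpow_const continuousOn_id
      intro x hx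
      rw [uIcc_of_le hru.le] at hx
      exact Or.inl (ne_of_gt (lt_of_lt_of_le hr hx.1))
    · exact ((continuous_const.sub continuous_id).rpow_const
        (fun x => Or.inr hp1.le)).continuousOn
  rw [intervalIntegral.integral_const_mul, intervalIntegral.integral_add i1 i2]
  rw [integral_inv (by rw [uIcc_of_le hru.le]; exact fun h => absurd h.1 (not_le.mpr hr))]
  have subst : (∫ θ in r..u, θ ^ (-(2*H)) * (u - θ) ^ (2*H-1))
      = ∫ x in (0:ℝ)..1, (1 - x) ^ (2*H-1) * (x + r/(u-r)) ^ (-(2*H)) := by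
    have h := intervalIntegral.integral_comp_mul_add (a := (0:ℝ)) (b := 1)
      (f := fun θ => θ ^ (-(2*H)) * (u - θ) ^ (2*H-1)) (ne_of_gt hur) r
    rw [show (u-r)*0 + r = r by ring, show (u-r)*1 + r = u by ring, smul_eq_mul] at h
    have h2 : (∫ θ in r..u, θ ^ (-(2*H)) * (u - θ) ^ (2*H-1))
        = (u - r) * ∫ x in (0:ℝ)..1,
            ((u-r)*x + r) ^ (-(2*H)) * (u - ((u-r)*x + r)) ^ (2*H-1) := by
      rw [h, ← mul_assoc, mul_inv_cancel₀ (ne_of_gt hur), one_mul]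
    rw [h2, ← intervalIntegral.integral_const_mul]
    apply intervalIntegral.integral_congr
    intro x hx
    rw [uIcc_of_le zero_le_one] at hx
    show (u - r) * (((u-r)*x + r) ^ (-(2*H)) * (u - ((u-r)*x + r)) ^ (2*H-1))
        = (1 - x) ^ (2*H-1) * (x + r/(u-r)) ^ (-(2*H))
    have e1 : (u-r)*x + r = (u-r) * (x + r/(u-r)) := by field_simp
    have e2 : u - ((u-r)*x + r) = (u-r) * (1-x) := by ring
    rw [e2, e1, Real.mul_rpow hur.le (add_nonneg hx.1 (div_nonneg hr.le hur.le)),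
      Real.mul_rpow hur.le (by linarith [hx.2] : (0:ℝ) ≤ 1 - x)]
    have e3 : (u - r) * ((u-r) ^ (-(2*H)) * (u-r) ^ (2*H-1)) = 1 := by
      rw [← Real.rpow_add hur]
      have : -(2*H) + (2*H-1) = -1 := by ring
      rw [this, Real.rpow_neg_one, mul_inv_cancel₀ (ne_of_gt hur)]
    have e4 : (u - r) * ((u-r) ^ (-(2*H)) * (x + r/(u-r)) ^ (-(2*H)) *
          ((u-r) ^ (2*H-1) * (1-x) ^ (2*H-1)))
        = ((u - r) * ((u-r) ^ (-(2*H)) * (u-r) ^ (2*H-1))) *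
          ((1-x) ^ (2*H-1) * (x + r/(u-r)) ^ (-(2*H))) := by ring
    rw [e4, e3, one_mul]
  rw [subst]
  have h21 : (2*H - 1) ≠ 0 := ne_of_gt hp1
  rw [← mul_assoc, mul_assoc H, mul_one_div_cancel h21, mul_one, mul_add]
end

section
/- For H ∈ (1/2, 1), the constant d = ∫₀^∞ ∫₁^∞ y^{-H} |y - x|^{2H-2} x^{-2H} dx dy is finite. -/
open MeasureTheory Set Real

/-- Scaling change of variables for a lower Lebesgue integral over `(0, ∞)`. -/
lemma lintegral_Ioi_zero_comp_mul {f : ℝ → ENNReal} (hf : Measurable f) {c : ℝ} (hc : 0 < c) :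
    ∫⁻ y in Set.Ioi (0:ℝ), f y = ENNReal.ofReal c * ∫⁻ u in Set.Ioi (0:ℝ), f (c * u) := by
  have hpre : (fun u : ℝ => c * u) ⁻¹' (Set.Ioi 0) = Set.Ioi 0 := by
    rw [Set.preimage_const_mul_Ioi₀ _ hc, zero_div]
  have hmap : Measure.map (fun u : ℝ => c * u) (volume.restrict (Set.Ioi 0))
      = (ENNReal.ofReal |c⁻¹| • volume).restrict (Set.Ioi 0) := by
    nth_rewrite 1 [← hpre]
    rw [← Measure.restrict_map (measurable_const_mul c) measurableSet_Ioi,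
      Real.map_volume_mul_left hc.ne']
  have h1 : ∫⁻ u in Set.Ioi (0:ℝ), f (c * u)
      = ENNReal.ofReal |c⁻¹| * ∫⁻ y in Set.Ioi (0:ℝ), f y := by
    rw [← lintegral_map hf (measurable_const_mul c), hmap,
      Measure.restrict_smul, lintegral_smul_measure, smul_eq_mul]
  rw [h1, ← mul_assoc, ← ENNReal.ofReal_mul hc.le, abs_of_pos (inv_pos.mpr hc),
    mul_inv_cancel₀ hc.ne', ENNReal.ofReal_one, one_mul]

/-- The function `u ↦ u^{-H} |u-1|^{2H-2}` is integrable on `(0, ∞)` for `H ∈ (1/2, 1)`. -/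
lemma fbm_aux_integrable (H : ℝ) (hH : H ∈ Set.Ioo (1/2 : ℝ) 1) :
    IntegrableOn (fun u : ℝ => u ^ (-H) * |u - 1| ^ (2*H - 2)) (Set.Ioi 0) := by
  obtain ⟨h1, h2⟩ := hH
  have hmeas : Measurable (fun u : ℝ => u ^ (-H) * |u - 1| ^ (2*H - 2)) := by fun_prop
  have hexp : (2*H - 2 : ℝ) ≤ 0 := by linarith
  -- piece 1 : (0, 1/2]
  have hA : IntegrableOn (fun u : ℝ => u ^ (-H) * |u - 1| ^ (2*H - 2)) (Set.Ioc 0 (1/2)) := by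
    have base : IntegrableOn (fun u : ℝ => (1/2:ℝ) ^ (2*H-2) * u ^ (-H)) (Set.Ioc 0 (1/2)) := by
      exact IntegrableOn.congr_set_ae (((intervalIntegral.integrableOn_Ioo_rpow_iff
        (by norm_num : (0:ℝ) < 1/2)).mpr (by linarith)).const_mul _) Ioo_ae_eq_Ioc.symm
    refine base.mono' hmeas.aestronglyMeasurable ?_
    filter_upwards [ae_restrict_mem measurableSet_Ioc] with u hu
    have hu0 : 0 < u := hu.1
    have habs : |u - 1| = 1 - u := by rw [abs_of_nonpos (by linarith [hu.2])]; ring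
    rw [Real.norm_eq_abs, abs_of_nonneg (mul_nonneg (rpow_nonneg hu0.le _)
      (rpow_nonneg (abs_nonneg _) _)), mul_comm ((1/2:ℝ) ^ (2*H-2)) _]
    refine mul_le_mul_of_nonneg_left ?_ (rpow_nonneg hu0.le _)
    refine Real.rpow_le_rpow_of_nonpos (by norm_num) ?_ hexp
    rw [habs]; linarith [hu.2]
  -- piece 2 : (1/2, 1]
  have hB : IntegrableOn (fun u : ℝ => u ^ (-H) * |u - 1| ^ (2*H - 2)) (Set.Ioc (1/2) 1) := by
    have base0 : IntervalIntegrable (fun x : ℝ => x ^ (2*H-2)) volume 0 (1/2) :=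
      intervalIntegral.intervalIntegrable_rpow' (by linarith)
    have base1 : IntervalIntegrable (fun x : ℝ => (1 - x) ^ (2*H-2)) volume (1/2) 1 := by
      have := (base0.comp_sub_left 1).symm
      norm_num at this
      exact this
    have base : IntegrableOn (fun u : ℝ => (1/2:ℝ) ^ (-H) * (1 - u) ^ (2*H-2))
        (Set.Ioc (1/2) 1) :=
      ((intervalIntegrable_iff_integrableOn_Ioc_of_le (by norm_num)).mp base1).const_mul _
    refine base.mono' hmeas.aestronglyMeasurable ?_
    filter_upwards [ae_restrict_mem measurableSet_Ioc] with u hu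
    have hu0 : (0:ℝ) < u := lt_trans (by norm_num) hu.1
    have habs : |u - 1| = 1 - u := by rw [abs_of_nonpos (by linarith [hu.2])]; ring
    rw [Real.norm_eq_abs, abs_of_nonneg (mul_nonneg (rpow_nonneg hu0.le _)
      (rpow_nonneg (abs_nonneg _) _)), habs]
    refine mul_le_mul_of_nonneg_right ?_ (rpow_nonneg (by linarith [hu.2]) _)
    exact Real.rpow_le_rpow_of_nonpos (by norm_num) hu.1.le (by linarith)
  -- piece 3 : (1, 2]
  have hC : IntegrableOn (fun u : ℝ => u ^ (-H) * |u - 1| ^ (2*H - 2)) (Set.Ioc 1 2) := by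
    have base0 : IntervalIntegrable (fun x : ℝ => x ^ (2*H-2)) volume 0 1 :=
      intervalIntegral.intervalIntegrable_rpow' (by linarith)
    have base1 : IntervalIntegrable (fun x : ℝ => (x - 1) ^ (2*H-2)) volume 1 2 := by
      have := base0.comp_sub_right 1
      norm_num at this
      exact this
    have base : IntegrableOn (fun u : ℝ => (u - 1) ^ (2*H-2)) (Set.Ioc 1 2) :=
      (intervalIntegrable_iff_integrableOn_Ioc_of_le (by norm_num)).mp base1
    refine base.mono' hmeas.aestronglyMeasurable ?_
    filter_upwards [ae_restrict_mem measurableSet_Ioc] with u hu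
    have hu0 : (0:ℝ) < u := lt_trans one_pos hu.1
    have habs : |u - 1| = u - 1 := abs_of_nonneg (by linarith [hu.1])
    rw [Real.norm_eq_abs, abs_of_nonneg (mul_nonneg (rpow_nonneg hu0.le _)
      (rpow_nonneg (abs_nonneg _) _)), habs]
    calc u ^ (-H) * (u - 1) ^ (2*H-2) ≤ 1 * (u - 1) ^ (2*H-2) := by
          refine mul_le_mul_of_nonneg_right ?_ (rpow_nonneg (by linarith [hu.1]) _)
          exact Real.rpow_le_one_of_one_le_of_nonpos hu.1.le (by linarith)
      _ = (u - 1) ^ (2*H-2) := one_mul _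
  -- piece 4 : (2, ∞)
  have hD : IntegrableOn (fun u : ℝ => u ^ (-H) * |u - 1| ^ (2*H - 2)) (Set.Ioi 2) := by
    have base : IntegrableOn (fun u : ℝ => (2:ℝ) ^ (2 - 2*H) * u ^ (H - 2)) (Set.Ioi 2) :=
      (integrableOn_Ioi_rpow_of_lt (by linarith) (by norm_num : (0:ℝ) < 2)).const_mul _
    refine base.mono' hmeas.aestronglyMeasurable ?_
    filter_upwards [ae_restrict_mem measurableSet_Ioi] with u hu
    simp only [Set.mem_Ioi] at hu
    have hu0 : (0:ℝ) < u := by linarith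
    have habs : |u - 1| = u - 1 := abs_of_nonneg (by linarith)
    rw [Real.norm_eq_abs, abs_of_nonneg (mul_nonneg (rpow_nonneg hu0.le _)
      (rpow_nonneg (abs_nonneg _) _)), habs]
    have step1 : (u - 1) ^ (2*H-2) ≤ (u * 2⁻¹) ^ (2*H-2) := by
      refine Real.rpow_le_rpow_of_nonpos (by linarith) (by linarith) hexp
    have step2 : (u * 2⁻¹) ^ (2*H-2) = u ^ (2*H-2) * (2:ℝ) ^ (2-2*H) := by
      rw [Real.mul_rpow hu0.le (by norm_num), Real.inv_rpow (by norm_num),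
        ← Real.rpow_neg (by norm_num)]
      ring_nf
    calc u ^ (-H) * (u - 1) ^ (2*H-2)
        ≤ u ^ (-H) * ((u * 2⁻¹) ^ (2*H-2)) :=
          mul_le_mul_of_nonneg_left step1 (rpow_nonneg hu0.le _)
      _ = (2:ℝ) ^ (2-2*H) * (u ^ (-H) * u ^ (2*H-2)) := by rw [step2]; ring
      _ = (2:ℝ) ^ (2-2*H) * u ^ (H-2) := by
          rw [← Real.rpow_add hu0]; ring_nf
  -- combine
  have hunion : Set.Ioi (0:ℝ) = (Set.Ioc 0 (1/2) ∪ Set.Ioc (1/2) 1) ∪ (Set.Ioc 1 2 ∪ Set.Ioi 2) := by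
    rw [Set.Ioc_union_Ioc_eq_Ioc (by norm_num) (by norm_num),
      Set.Ioc_union_Ioi_eq_Ioi (by norm_num),
      Set.Ioc_union_Ioi_eq_Ioi (by norm_num)]
  rw [hunion]
  exact (hA.union hB).union (hC.union hD)

/-- For `H ∈ (1/2,1)`, the constant
`d = ∫₀^∞ ∫₁^∞ y^{-H} |y-x|^{2H-2} x^{-2H} dx dy` is finite. -/
theorem fbm_constant_d_finite (H : ℝ) (hH : H ∈ Set.Ioo (1/2 : ℝ) 1) :
    (∫⁻ y in Set.Ioi (0:ℝ), ∫⁻ x in Set.Ioi (1:ℝ),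
        ENNReal.ofReal (y ^ (-H) * |y - x| ^ (2*H - 2) * x ^ (-(2*H)))) < ⊤ := by
  obtain ⟨h1, h2⟩ := hH
  set B : ENNReal := ∫⁻ u in Set.Ioi (0:ℝ), ENNReal.ofReal (u ^ (-H) * |u - 1| ^ (2*H - 2))
    with hBdef
  have hgmeas : Measurable (fun u : ℝ => ENNReal.ofReal (u ^ (-H) * |u - 1| ^ (2*H - 2))) := by
    fun_prop
  have hBfin : B < ⊤ := (fbm_aux_integrable H ⟨h1, h2⟩).lintegral_lt_top
  have hmeas2 : Measurable (Function.uncurry fun y x : ℝ =>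
      ENNReal.ofReal (y ^ (-H) * |y - x| ^ (2*H - 2) * x ^ (-(2*H)))) := by
    unfold Function.uncurry; fun_prop
  rw [lintegral_lintegral_swap hmeas2.aemeasurable]
  have key : ∀ x ∈ Set.Ioi (1:ℝ),
      (∫⁻ y in Set.Ioi (0:ℝ),
        ENNReal.ofReal (y ^ (-H) * |y - x| ^ (2*H - 2) * x ^ (-(2*H))))
      = ENNReal.ofReal (x ^ (-H - 1)) * B := by
    intro x hx
    have hx0 : (0:ℝ) < x := lt_trans one_pos hx
    have hfmeas : Measurable (fun y : ℝ =>
        ENNReal.ofReal (y ^ (-H) * |y - x| ^ (2*H - 2) * x ^ (-(2*H)))) := by fun_prop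
    rw [lintegral_Ioi_zero_comp_mul hfmeas hx0]
    have hcongr : ∫⁻ u in Set.Ioi (0:ℝ),
        ENNReal.ofReal ((x * u) ^ (-H) * |x * u - x| ^ (2*H - 2) * x ^ (-(2*H)))
        = ∫⁻ u in Set.Ioi (0:ℝ),
          ENNReal.ofReal (x ^ (-H - 2)) *
            ENNReal.ofReal (u ^ (-H) * |u - 1| ^ (2*H - 2)) := by
      refine setLIntegral_congr_fun measurableSet_Ioi (fun u hu => ?_)
      have hu0 : (0:ℝ) < u := hu
      have habs : |x * u - x| = x * |u - 1| := by
        have hxe : x * u - x = x * (u - 1) := by ring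
        rw [hxe, abs_mul, abs_of_pos hx0]
      have hxpow : x ^ (-H) * x ^ (2*H-2) * x ^ (-(2*H)) = x ^ (-H - 2) := by
        rw [← Real.rpow_add hx0, ← Real.rpow_add hx0]; ring_nf
      rw [← ENNReal.ofReal_mul (rpow_nonneg hx0.le _)]
      congr 1
      rw [Real.mul_rpow hx0.le hu0.le, habs, Real.mul_rpow hx0.le (abs_nonneg _)]
      calc x ^ (-H) * u ^ (-H) * (x ^ (2*H-2) * |u - 1| ^ (2*H-2)) * x ^ (-(2*H))
          = (x ^ (-H) * x ^ (2*H-2) * x ^ (-(2*H))) * (u ^ (-H) * |u - 1| ^ (2*H-2)) := by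
            ring
        _ = x ^ (-H - 2) * (u ^ (-H) * |u - 1| ^ (2*H-2)) := by rw [hxpow]
    rw [hcongr, lintegral_const_mul _ hgmeas, ← hBdef, ← mul_assoc,
      ← ENNReal.ofReal_mul hx0.le]
    congr 2
    nth_rewrite 1 [← Real.rpow_one x]
    rw [← Real.rpow_add hx0]
    ring_nf
  rw [setLIntegral_congr_fun measurableSet_Ioi key]
  rw [lintegral_mul_const'' B (by fun_prop : Measurable fun x : ℝ =>
    ENNReal.ofReal (x ^ (-H - 1))).aemeasurable]
  exact ENNReal.mul_lt_top
    (integrableOn_Ioi_rpow_of_lt (by linarith) one_pos).lintegral_lt_top hBfin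
end

section
/- For H ∈ (1/2, 1) there exists a constant C such that for all u > 0 and all 0 < r < u, ∫₀^u ∫_r^u σ^{-H} |σ-θ|^{2H-2} θ^{-2H} dθ dσ ≤ C r^{-H}. -/
open MeasureTheory Set

namespace FbmKernelAux

lemma half_rpow {a : ℝ} (ha : 0 ≤ a) (q : ℝ) : (a / 2) ^ q = a ^ q * 2 ^ (-q) := by
  rw [div_eq_mul_inv, Real.mul_rpow ha (by norm_num), Real.inv_rpow (by norm_num),
    ← Real.rpow_neg (by norm_num)]

lemma lint_Ioc_rpow {p : ℝ} (hp : -1 < p) {a : ℝ} (ha : 0 < a) :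
    ∫⁻ x in Ioc (0:ℝ) a, ENNReal.ofReal (x ^ p) = ENNReal.ofReal (a ^ (p + 1) / (p + 1)) := by
  have hint : IntegrableOn (fun x : ℝ => x ^ p) (Ioc 0 a) volume :=
    (intervalIntegral.intervalIntegrable_rpow' hp (a := 0) (b := a)).1
  have hnn : 0 ≤ᵐ[volume.restrict (Ioc (0:ℝ) a)] fun x : ℝ => x ^ p := by
    filter_upwards [ae_restrict_mem measurableSet_Ioc] with x hx
    exact Real.rpow_nonneg hx.1.le p
  rw [← ofReal_integral_eq_lintegral_ofReal hint hnn]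
  congr 1
  rw [← intervalIntegral.integral_of_le ha.le, integral_rpow (Or.inl hp),
    Real.zero_rpow (by linarith), sub_zero]

lemma lint_Ioi_rpow {p : ℝ} (hp : p < -1) {c : ℝ} (hc : 0 < c) :
    ∫⁻ x in Ioi c, ENNReal.ofReal (x ^ p) = ENNReal.ofReal (-c ^ (p + 1) / (p + 1)) := by
  have hint := integrableOn_Ioi_rpow_of_lt hp hc
  have hnn : 0 ≤ᵐ[volume.restrict (Ioi c)] fun x : ℝ => x ^ p := by
    filter_upwards [ae_restrict_mem measurableSet_Ioi] with x hx
    exact Real.rpow_nonneg (hc.trans hx).le p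
  rw [← ofReal_integral_eq_lintegral_ofReal hint hnn, integral_Ioi_rpow_of_lt hp hc]

lemma lint_abs_Ioc {p : ℝ} (hp : -1 < p) {a : ℝ} (ha : 0 < a) :
    ∫⁻ x in Ioc (0:ℝ) a, ENNReal.ofReal (|x| ^ p) = ENNReal.ofReal (a ^ (p + 1) / (p + 1)) := by
  rw [← lint_Ioc_rpow hp ha]
  apply setLIntegral_congr_fun_ae measurableSet_Ioc
  exact ae_of_all _ fun x hx => by rw [abs_of_pos hx.1]

lemma inner_bound {H : ℝ} (hH1 : 1/2 < H) (hH2 : H < 1) {θ : ℝ} (hθ : 0 < θ) :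
    ∫⁻ σ in Ioi (0:ℝ), ENNReal.ofReal (σ ^ (-H) * |σ - θ| ^ (2*H - 2))
      ≤ ENNReal.ofReal ((2 ^ (2 - H) / (1 - H) + 2 ^ (H + 1) / (2*H - 1)) * θ ^ (H - 1)) := by
  have h1 : (0:ℝ) < θ / 2 := by linarith
  have h2θ : (0:ℝ) < 2 * θ := by linarith
  have ht : (0:ℝ) ≤ θ ^ (H - 1) := Real.rpow_nonneg hθ.le _
  have hc1 : (0:ℝ) ≤ 2 ^ (1 - H) / (1 - H) :=
    div_nonneg (Real.rpow_nonneg (by norm_num) _) (by linarith)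
  have hc2 : (0:ℝ) ≤ 2 ^ (H + 1) / (2*H - 1) :=
    div_nonneg (Real.rpow_nonneg (by norm_num) _) (by linarith)
  have hset : Ioi (0:ℝ) = Ioc 0 (θ/2) ∪ (Ioc (θ/2) (2*θ) ∪ Ioi (2*θ)) := by
    ext x
    simp only [mem_Ioi, mem_union, mem_Ioc]
    constructor
    · intro hx
      rcases le_or_gt x (θ/2) with h | h
      · exact Or.inl ⟨hx, h⟩
      · rcases le_or_gt x (2*θ) with h' | h'
        · exact Or.inr (Or.inl ⟨h, h'⟩)
        · exact Or.inr (Or.inr h')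
    · rintro (⟨h, _⟩ | ⟨⟨h, _⟩ | h⟩) <;> linarith
  have d1 : Disjoint (Ioc (0:ℝ) (θ/2)) (Ioc (θ/2) (2*θ) ∪ Ioi (2*θ)) := by
    rw [Set.disjoint_left]
    rintro x ⟨_, hx2⟩ (⟨hx3, _⟩ | hx3)
    · linarith
    · rw [mem_Ioi] at hx3; linarith
  have d2 : Disjoint (Ioc (θ/2) (2*θ)) (Ioi (2*θ)) := by
    rw [Set.disjoint_left]
    rintro x ⟨_, hx2⟩ hx3
    rw [mem_Ioi] at hx3; linarith
  rw [hset, lintegral_union (measurableSet_Ioc.union measurableSet_Ioi) d1,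
    lintegral_union measurableSet_Ioi d2]
  have hP1 : ∫⁻ σ in Ioc (0:ℝ) (θ/2), ENNReal.ofReal (σ ^ (-H) * |σ - θ| ^ (2*H - 2))
      ≤ ENNReal.ofReal (2 ^ (1 - H) / (1 - H) * θ ^ (H - 1)) := by
    have step1 : ∫⁻ σ in Ioc (0:ℝ) (θ/2), ENNReal.ofReal (σ ^ (-H) * |σ - θ| ^ (2*H - 2))
        ≤ ∫⁻ σ in Ioc (0:ℝ) (θ/2),
            ENNReal.ofReal ((θ/2) ^ (2*H - 2)) * ENNReal.ofReal (σ ^ (-H)) := by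
      apply lintegral_mono_ae
      filter_upwards [ae_restrict_mem measurableSet_Ioc] with σ hσ
      rw [← ENNReal.ofReal_mul (Real.rpow_nonneg h1.le _)]
      apply ENNReal.ofReal_le_ofReal
      have habs : |σ - θ| = θ - σ := by
        rw [abs_sub_comm]; exact abs_of_pos (by linarith [hσ.2])
      calc σ ^ (-H) * |σ - θ| ^ (2*H - 2)
          ≤ σ ^ (-H) * (θ/2) ^ (2*H - 2) := by
            apply mul_le_mul_of_nonneg_left _ (Real.rpow_nonneg hσ.1.le _)
            rw [habs]
            exact Real.rpow_le_rpow_of_nonpos h1 (by linarith [hσ.2]) (by linarith)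
        _ = (θ/2) ^ (2*H - 2) * σ ^ (-H) := mul_comm _ _
    have E1 : (θ/2) ^ (2*H - 2) * ((θ/2) ^ (-H + 1) / (-H + 1))
        = 2 ^ (1 - H) / (1 - H) * θ ^ (H - 1) := by
      rw [half_rpow hθ.le, half_rpow hθ.le]
      have e1 : θ ^ (2*H - 2) * θ ^ (-H + 1) = θ ^ (H - 1) := by
        rw [← Real.rpow_add hθ, show 2*H - 2 + (-H + 1) = H - 1 by ring]
      have e2 : (2:ℝ) ^ (-(2*H - 2)) * 2 ^ (-(-H + 1)) = 2 ^ (1 - H) := by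
        rw [← Real.rpow_add two_pos, show -(2*H - 2) + -(-H + 1) = 1 - H by ring]
      calc θ ^ (2*H - 2) * 2 ^ (-(2*H - 2)) * (θ ^ (-H + 1) * 2 ^ (-(-H + 1)) / (-H + 1))
          = θ ^ (2*H - 2) * θ ^ (-H + 1) * ((2:ℝ) ^ (-(2*H - 2)) * 2 ^ (-(-H + 1))) / (-H + 1) := by
            ring
        _ = θ ^ (H - 1) * 2 ^ (1 - H) / (-H + 1) := by rw [e1, e2]
        _ = 2 ^ (1 - H) / (1 - H) * θ ^ (H - 1) := by
            rw [show -H + 1 = 1 - H by ring]; ring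
    calc ∫⁻ σ in Ioc (0:ℝ) (θ/2), ENNReal.ofReal (σ ^ (-H) * |σ - θ| ^ (2*H - 2))
        ≤ ∫⁻ σ in Ioc (0:ℝ) (θ/2),
            ENNReal.ofReal ((θ/2) ^ (2*H - 2)) * ENNReal.ofReal (σ ^ (-H)) := step1
      _ = ENNReal.ofReal ((θ/2) ^ (2*H - 2)) * ∫⁻ σ in Ioc (0:ℝ) (θ/2),
            ENNReal.ofReal (σ ^ (-H)) := lintegral_const_mul' _ _ ENNReal.ofReal_ne_top
      _ = ENNReal.ofReal ((θ/2) ^ (2*H - 2)) * ENNReal.ofReal ((θ/2) ^ (-H + 1) / (-H + 1)) := by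
            rw [lint_Ioc_rpow (by linarith) h1]
      _ = ENNReal.ofReal ((θ/2) ^ (2*H - 2) * ((θ/2) ^ (-H + 1) / (-H + 1))) :=
            (ENNReal.ofReal_mul (Real.rpow_nonneg h1.le _)).symm
      _ = ENNReal.ofReal (2 ^ (1 - H) / (1 - H) * θ ^ (H - 1)) := by rw [E1]
  have hP3 : ∫⁻ σ in Ioi (2*θ), ENNReal.ofReal (σ ^ (-H) * |σ - θ| ^ (2*H - 2))
      ≤ ENNReal.ofReal (2 ^ (1 - H) / (1 - H) * θ ^ (H - 1)) := by
    have step1 : ∫⁻ σ in Ioi (2*θ), ENNReal.ofReal (σ ^ (-H) * |σ - θ| ^ (2*H - 2))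
        ≤ ∫⁻ σ in Ioi (2*θ),
            ENNReal.ofReal ((2:ℝ) ^ (2 - 2*H)) * ENNReal.ofReal (σ ^ (H - 2)) := by
      apply lintegral_mono_ae
      filter_upwards [ae_restrict_mem measurableSet_Ioi] with σ hσ
      rw [mem_Ioi] at hσ
      have hσ0 : (0:ℝ) < σ := by linarith
      rw [← ENNReal.ofReal_mul (Real.rpow_nonneg (by norm_num) _)]
      apply ENNReal.ofReal_le_ofReal
      have habs : |σ - θ| = σ - θ := abs_of_pos (by linarith)
      have hb : |σ - θ| ^ (2*H - 2) ≤ (σ/2) ^ (2*H - 2) := by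
        rw [habs]
        exact Real.rpow_le_rpow_of_nonpos (by linarith) (by linarith) (by linarith)
      calc σ ^ (-H) * |σ - θ| ^ (2*H - 2)
          ≤ σ ^ (-H) * (σ/2) ^ (2*H - 2) :=
            mul_le_mul_of_nonneg_left hb (Real.rpow_nonneg hσ0.le _)
        _ = 2 ^ (2 - 2*H) * σ ^ (H - 2) := by
            rw [half_rpow hσ0.le, ← mul_assoc, ← Real.rpow_add hσ0,
              show -H + (2*H - 2) = H - 2 by ring, show -(2*H - 2) = 2 - 2*H by ring]
            ring
    have E3 : (2:ℝ) ^ (2 - 2*H) * (-(2*θ) ^ (H - 2 + 1) / (H - 2 + 1))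
        = 2 ^ (1 - H) / (1 - H) * θ ^ (H - 1) := by
      rw [show H - 2 + 1 = H - 1 by ring, Real.mul_rpow (by norm_num) hθ.le]
      have e : (2:ℝ) ^ (2 - 2*H) * 2 ^ (H - 1) = 2 ^ (1 - H) := by
        rw [← Real.rpow_add two_pos, show 2 - 2*H + (H - 1) = 1 - H by ring]
      calc (2:ℝ) ^ (2 - 2*H) * (-((2:ℝ) ^ (H - 1) * θ ^ (H - 1)) / (H - 1))
          = -(((2:ℝ) ^ (2 - 2*H) * 2 ^ (H - 1)) * θ ^ (H - 1)) / (H - 1) := by ring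
        _ = -((2:ℝ) ^ (1 - H) * θ ^ (H - 1)) / (H - 1) := by rw [e]
        _ = 2 ^ (1 - H) / (1 - H) * θ ^ (H - 1) := by
            rw [show H - 1 = -(1 - H) by ring, div_neg, neg_div, neg_neg]; ring
    calc ∫⁻ σ in Ioi (2*θ), ENNReal.ofReal (σ ^ (-H) * |σ - θ| ^ (2*H - 2))
        ≤ ∫⁻ σ in Ioi (2*θ),
            ENNReal.ofReal ((2:ℝ) ^ (2 - 2*H)) * ENNReal.ofReal (σ ^ (H - 2)) := step1
      _ = ENNReal.ofReal ((2:ℝ) ^ (2 - 2*H)) * ∫⁻ σ in Ioi (2*θ),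
            ENNReal.ofReal (σ ^ (H - 2)) := lintegral_const_mul' _ _ ENNReal.ofReal_ne_top
      _ = ENNReal.ofReal ((2:ℝ) ^ (2 - 2*H)) *
            ENNReal.ofReal (-(2*θ) ^ (H - 2 + 1) / (H - 2 + 1)) := by
            rw [lint_Ioi_rpow (by linarith) h2θ]
      _ = ENNReal.ofReal ((2:ℝ) ^ (2 - 2*H) * (-(2*θ) ^ (H - 2 + 1) / (H - 2 + 1))) :=
            (ENNReal.ofReal_mul (Real.rpow_nonneg (by norm_num) _)).symm
      _ = ENNReal.ofReal (2 ^ (1 - H) / (1 - H) * θ ^ (H - 1)) := by rw [E3]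
  have hP2 : ∫⁻ σ in Ioc (θ/2) (2*θ), ENNReal.ofReal (σ ^ (-H) * |σ - θ| ^ (2*H - 2))
      ≤ ENNReal.ofReal (2 ^ (H + 1) / (2*H - 1) * θ ^ (H - 1)) := by
    have step1 : ∫⁻ σ in Ioc (θ/2) (2*θ), ENNReal.ofReal (σ ^ (-H) * |σ - θ| ^ (2*H - 2))
        ≤ ∫⁻ σ in Ioc (θ/2) (2*θ),
            ENNReal.ofReal ((θ/2) ^ (-H)) * ENNReal.ofReal (|σ - θ| ^ (2*H - 2)) := by
      apply lintegral_mono_ae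
      filter_upwards [ae_restrict_mem measurableSet_Ioc] with σ hσ
      rw [← ENNReal.ofReal_mul (Real.rpow_nonneg h1.le _)]
      apply ENNReal.ofReal_le_ofReal
      apply mul_le_mul_of_nonneg_right _ (Real.rpow_nonneg (abs_nonneg _) _)
      exact Real.rpow_le_rpow_of_nonpos h1 hσ.1.le (by linarith)
    have hQL : ∫⁻ σ in Ioc (θ/2) θ, ENNReal.ofReal (|σ - θ| ^ (2*H - 2))
        = ENNReal.ofReal ((θ/2) ^ (2*H - 2 + 1) / (2*H - 2 + 1)) := by
      have hcomp := (Measure.measurePreserving_sub_left volume θ).setLIntegral_comp_emb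
        (Homeomorph.subLeft θ).measurableEmbedding
        (fun σ => ENNReal.ofReal (|σ - θ| ^ (2*H - 2))) (Ico 0 (θ/2))
      rw [Set.image_const_sub_Ico, show θ - θ/2 = θ/2 by ring, sub_zero] at hcomp
      simp only [sub_sub_cancel_left, abs_neg] at hcomp
      rw [← hcomp,
        setLIntegral_congr ((Ioo_ae_eq_Ico (μ := volume) (a := (0:ℝ)) (b := θ/2)).symm.trans
          Ioo_ae_eq_Ioc),
        lint_abs_Ioc (by linarith) h1]
    have hQR : ∫⁻ σ in Ioc θ (2*θ), ENNReal.ofReal (|σ - θ| ^ (2*H - 2))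
        = ENNReal.ofReal (θ ^ (2*H - 2 + 1) / (2*H - 2 + 1)) := by
      have hcomp := (measurePreserving_add_right volume θ).setLIntegral_comp_emb
        (Homeomorph.addRight θ).measurableEmbedding
        (fun σ => ENNReal.ofReal (|σ - θ| ^ (2*H - 2))) (Ioc 0 θ)
      rw [Set.image_add_const_Ioc, zero_add, show θ + θ = 2*θ by ring] at hcomp
      simp only [add_sub_cancel_right] at hcomp
      rw [← hcomp, lint_abs_Ioc (by linarith) hθ]
    have hQ : ∫⁻ σ in Ioc (θ/2) (2*θ), ENNReal.ofReal (|σ - θ| ^ (2*H - 2))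
        ≤ ENNReal.ofReal (2 * (θ ^ (2*H - 1) / (2*H - 1))) := by
      rw [← Set.Ioc_union_Ioc_eq_Ioc (by linarith : θ/2 ≤ θ) (by linarith : θ ≤ 2*θ),
        lintegral_union measurableSet_Ioc (Set.Ioc_disjoint_Ioc_of_le le_rfl), hQL, hQR,
        ← ENNReal.ofReal_add (div_nonneg (Real.rpow_nonneg h1.le _) (by linarith))
          (div_nonneg (Real.rpow_nonneg hθ.le _) (by linarith))]
      apply ENNReal.ofReal_le_ofReal
      have hle : (θ/2) ^ (2*H - 2 + 1) ≤ θ ^ (2*H - 2 + 1) :=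
        Real.rpow_le_rpow h1.le (by linarith) (by linarith)
      have h2H : (0:ℝ) < 2*H - 2 + 1 := by linarith
      rw [show 2*H - 2 + 1 = 2*H - 1 by ring] at hle h2H ⊢
      linarith [div_le_div_of_nonneg_right hle h2H.le]
    have E2 : (θ/2) ^ (-H) * (2 * (θ ^ (2*H - 1) / (2*H - 1)))
        = 2 ^ (H + 1) / (2*H - 1) * θ ^ (H - 1) := by
      rw [half_rpow hθ.le, neg_neg]
      have e1 : θ ^ (-H) * θ ^ (2*H - 1) = θ ^ (H - 1) := by
        rw [← Real.rpow_add hθ, show -H + (2*H - 1) = H - 1 by ring]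
      have e2 : (2:ℝ) ^ (H + 1) = 2 ^ H * 2 := by
        rw [Real.rpow_add two_pos, Real.rpow_one]
      calc θ ^ (-H) * 2 ^ H * (2 * (θ ^ (2*H - 1) / (2*H - 1)))
          = θ ^ (-H) * θ ^ (2*H - 1) * ((2:ℝ) ^ H * 2) / (2*H - 1) := by ring
        _ = θ ^ (H - 1) * (2:ℝ) ^ (H + 1) / (2*H - 1) := by rw [e1, ← e2]
        _ = 2 ^ (H + 1) / (2*H - 1) * θ ^ (H - 1) := by ring
    calc ∫⁻ σ in Ioc (θ/2) (2*θ), ENNReal.ofReal (σ ^ (-H) * |σ - θ| ^ (2*H - 2))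
        ≤ ∫⁻ σ in Ioc (θ/2) (2*θ),
            ENNReal.ofReal ((θ/2) ^ (-H)) * ENNReal.ofReal (|σ - θ| ^ (2*H - 2)) := step1
      _ = ENNReal.ofReal ((θ/2) ^ (-H)) * ∫⁻ σ in Ioc (θ/2) (2*θ),
            ENNReal.ofReal (|σ - θ| ^ (2*H - 2)) := lintegral_const_mul' _ _ ENNReal.ofReal_ne_top
      _ ≤ ENNReal.ofReal ((θ/2) ^ (-H)) * ENNReal.ofReal (2 * (θ ^ (2*H - 1) / (2*H - 1))) :=
            mul_le_mul_right hQ _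
      _ = ENNReal.ofReal ((θ/2) ^ (-H) * (2 * (θ ^ (2*H - 1) / (2*H - 1)))) :=
            (ENNReal.ofReal_mul (Real.rpow_nonneg h1.le _)).symm
      _ = ENNReal.ofReal (2 ^ (H + 1) / (2*H - 1) * θ ^ (H - 1)) := by rw [E2]
  calc (∫⁻ σ in Ioc (0:ℝ) (θ/2), ENNReal.ofReal (σ ^ (-H) * |σ - θ| ^ (2*H - 2)))
        + ((∫⁻ σ in Ioc (θ/2) (2*θ), ENNReal.ofReal (σ ^ (-H) * |σ - θ| ^ (2*H - 2)))
          + ∫⁻ σ in Ioi (2*θ), ENNReal.ofReal (σ ^ (-H) * |σ - θ| ^ (2*H - 2)))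
      ≤ ENNReal.ofReal (2 ^ (1 - H) / (1 - H) * θ ^ (H - 1))
        + (ENNReal.ofReal (2 ^ (H + 1) / (2*H - 1) * θ ^ (H - 1))
          + ENNReal.ofReal (2 ^ (1 - H) / (1 - H) * θ ^ (H - 1))) :=
        add_le_add hP1 (add_le_add hP2 hP3)
    _ = ENNReal.ofReal (2 ^ (1 - H) / (1 - H) * θ ^ (H - 1)
          + (2 ^ (H + 1) / (2*H - 1) * θ ^ (H - 1) + 2 ^ (1 - H) / (1 - H) * θ ^ (H - 1))) := by
        rw [← ENNReal.ofReal_add (mul_nonneg hc2 ht) (mul_nonneg hc1 ht),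
          ← ENNReal.ofReal_add (mul_nonneg hc1 ht)
            (add_nonneg (mul_nonneg hc2 ht) (mul_nonneg hc1 ht))]
    _ = ENNReal.ofReal ((2 ^ (2 - H) / (1 - H) + 2 ^ (H + 1) / (2*H - 1)) * θ ^ (H - 1)) := by
        congr 1
        have e : (2:ℝ) ^ (2 - H) = 2 ^ (1 - H) * 2 := by
          rw [show 2 - H = (1 - H) + 1 by ring, Real.rpow_add two_pos, Real.rpow_one]
        rw [e]; ring

end FbmKernelAux

open FbmKernelAux

/-- For `H ∈ (1/2,1)` there is `C > 0` such that for all `0 < r < u`,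
`∫₀^u ∫_r^u σ^{-H} |σ-θ|^{2H-2} θ^{-2H} dθ dσ ≤ C r^{-H}`. -/
theorem fbm_kernel_bound_neg (H : ℝ) (hH : H ∈ Set.Ioo (1/2 : ℝ) 1) :
    ∃ C : ℝ, 0 < C ∧ ∀ u r : ℝ, 0 < r → r < u →
      (∫⁻ σ in Set.Ioc (0:ℝ) u, ∫⁻ θ in Set.Ioc r u,
          ENNReal.ofReal (σ ^ (-H) * |σ - θ| ^ (2*H - 2) * θ ^ (-(2*H))))
        ≤ ENNReal.ofReal (C * r ^ (-H)) := by
  obtain ⟨hH1, hH2⟩ := hH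
  set K : ℝ := 2 ^ (2 - H) / (1 - H) + 2 ^ (H + 1) / (2*H - 1) with hKdef
  have hK : 0 < K := by
    apply add_pos
    · exact div_pos (Real.rpow_pos_of_pos two_pos _) (by linarith)
    · exact div_pos (Real.rpow_pos_of_pos two_pos _) (by linarith)
  refine ⟨K / H, div_pos hK (by linarith), fun u r hr hru => ?_⟩
  have hmeas : AEMeasurable (Function.uncurry fun σ θ : ℝ =>
      ENNReal.ofReal (σ ^ (-H) * |σ - θ| ^ (2*H - 2) * θ ^ (-(2*H))))
      ((volume.restrict (Set.Ioc (0:ℝ) u)).prod (volume.restrict (Set.Ioc r u))) := by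
    apply Measurable.aemeasurable; fun_prop
  rw [lintegral_lintegral_swap hmeas]
  have key : ∀ θ : ℝ, θ ∈ Set.Ioc r u →
      (∫⁻ σ in Set.Ioc (0:ℝ) u,
        ENNReal.ofReal (σ ^ (-H) * |σ - θ| ^ (2*H - 2) * θ ^ (-(2*H))))
      ≤ ENNReal.ofReal (K * θ ^ (-H - 1)) := by
    intro θ hθmem
    have hθ : 0 < θ := hr.trans hθmem.1
    have hrw : ∀ σ : ℝ, σ ^ (-H) * |σ - θ| ^ (2*H - 2) * θ ^ (-(2*H))
        = θ ^ (-(2*H)) * (σ ^ (-H) * |σ - θ| ^ (2*H - 2)) := fun σ => by ring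
    simp_rw [hrw, ENNReal.ofReal_mul (Real.rpow_nonneg hθ.le _),
      lintegral_const_mul' _ _ ENNReal.ofReal_ne_top]
    calc ENNReal.ofReal (θ ^ (-(2*H))) * ∫⁻ σ in Set.Ioc (0:ℝ) u,
            ENNReal.ofReal (σ ^ (-H) * |σ - θ| ^ (2*H - 2))
        ≤ ENNReal.ofReal (θ ^ (-(2*H))) * ENNReal.ofReal (K * θ ^ (H - 1)) := by
          apply mul_le_mul_right
          exact le_trans (lintegral_mono_set Set.Ioc_subset_Ioi_self) (inner_bound hH1 hH2 hθ)
      _ = ENNReal.ofReal (K * θ ^ (-H - 1)) := by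
          rw [← ENNReal.ofReal_mul (Real.rpow_nonneg hθ.le _)]
          congr 1
          rw [mul_comm K, ← mul_assoc, ← Real.rpow_add hθ,
            show -(2*H) + (H - 1) = -H - 1 by ring]
          ring
  calc (∫⁻ θ in Set.Ioc r u, ∫⁻ σ in Set.Ioc (0:ℝ) u,
          ENNReal.ofReal (σ ^ (-H) * |σ - θ| ^ (2*H - 2) * θ ^ (-(2*H))))
      ≤ ∫⁻ θ in Set.Ioc r u, ENNReal.ofReal (K * θ ^ (-H - 1)) := by
        apply lintegral_mono_ae
        filter_upwards [ae_restrict_mem measurableSet_Ioc] with θ hθ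
        exact key θ hθ
    _ ≤ ∫⁻ θ in Set.Ioi r, ENNReal.ofReal (K * θ ^ (-H - 1)) :=
        lintegral_mono_set Set.Ioc_subset_Ioi_self
    _ = ENNReal.ofReal K * ∫⁻ θ in Set.Ioi r, ENNReal.ofReal (θ ^ (-H - 1)) := by
        simp_rw [ENNReal.ofReal_mul hK.le]
        exact lintegral_const_mul' _ _ ENNReal.ofReal_ne_top
    _ = ENNReal.ofReal K * ENNReal.ofReal (-r ^ (-H - 1 + 1) / (-H - 1 + 1)) := by
        rw [lint_Ioi_rpow (by linarith) hr]
    _ = ENNReal.ofReal (K / H * r ^ (-H)) := by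
        rw [← ENNReal.ofReal_mul hK.le]
        congr 1
        rw [show -H - 1 + 1 = -H by ring, show -H = -(H) from rfl, neg_div, div_neg, neg_neg]
        ring
end

section
/- For H ∈ (1/2, 1) there is a constant C (depending only on H) such that for all 0 < r ≤ u, ∫₀^u ∫₀^r σ^{-H} |σ-θ|^{2H-2} dθ dσ ≤ C r^{H}. -/
open MeasureTheory

open Set Real


lemma L1 {p : ℝ} (hp : -1 < p) {a : ℝ} (ha : 0 ≤ a) :
    ∫⁻ x in Ioc (0:ℝ) a, ENNReal.ofReal (x ^ p) = ENNReal.ofReal (a ^ (p+1) / (p+1)) := by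
  have hint : IntegrableOn (fun x : ℝ => x ^ p) (Ioc 0 a) := by
    have := intervalIntegral.intervalIntegrable_rpow' (a := 0) (b := a) hp
    rwa [intervalIntegrable_iff_integrableOn_Ioc_of_le ha] at this
  rw [← ofReal_integral_eq_lintegral_ofReal hint
      ((ae_restrict_iff' measurableSet_Ioc).2 (ae_of_all _ fun x hx => rpow_nonneg hx.1.le p))]
  congr 1
  rw [← intervalIntegral.integral_of_le ha, integral_rpow (Or.inl hp),
    Real.zero_rpow (by linarith), sub_zero]

lemma L2 {p : ℝ} (hp : p < -1) {c : ℝ} (hc : 0 < c) :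
    ∫⁻ x in Ioi c, ENNReal.ofReal (x ^ p) = ENNReal.ofReal (-c ^ (p+1) / (p+1)) := by
  rw [← ofReal_integral_eq_lintegral_ofReal (integrableOn_Ioi_rpow_of_lt hp hc)
      ((ae_restrict_iff' measurableSet_Ioi).2
        (ae_of_all _ fun x hx => rpow_nonneg (hc.trans hx).le p))]
  rw [integral_Ioi_rpow_of_lt hp hc]

lemma Mhalf {q : ℝ} (hq : -1 < q) {θ : ℝ} (hθ : 0 ≤ θ) :
    ∫⁻ t in Ioc (0:ℝ) θ, ENNReal.ofReal (|t| ^ q) = ENNReal.ofReal (θ ^ (q+1) / (q+1)) := by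
  rw [← L1 hq hθ]
  exact setLIntegral_congr_fun measurableSet_Ioc
    (fun t ht => by rw [abs_of_pos ht.1])

lemma Mmid {q : ℝ} (hq : -1 < q) {θ : ℝ} (hθ : 0 < θ) :
    ∫⁻ σ in Ioc (θ/2) (2*θ), ENNReal.ofReal (|σ - θ| ^ q)
      ≤ ENNReal.ofReal (2 * (θ ^ (q+1) / (q+1))) := by
  have hq1 : 0 < q + 1 := by linarith
  have hnn : 0 ≤ θ ^ (q+1) / (q+1) := div_nonneg (rpow_nonneg hθ.le _) hq1.le
  have hsub : Ioc (θ/2) (2*θ) = Ioc (θ/2) θ ∪ Ioc θ (2*θ) :=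
    (Ioc_union_Ioc_eq_Ioc (by linarith) (by linarith)).symm
  have h1 : ∫⁻ σ in Ioc (θ/2) θ, ENNReal.ofReal (|σ - θ| ^ q)
      ≤ ENNReal.ofReal (θ ^ (q+1) / (q+1)) := by
    refine le_trans (lintegral_mono_set (show Ioc (θ/2) θ ⊆ Ioc 0 θ from Ioc_subset_Ioc_left (by linarith))) ?_
    have hsubst := (Measure.measurePreserving_sub_left volume θ).setLIntegral_comp_preimage_emb
      (MeasurableEquiv.subLeft θ).measurableEmbedding
      (fun σ => ENNReal.ofReal (|σ - θ| ^ q)) (Ioc 0 θ)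
    have hpre : (fun t : ℝ => θ - t) ⁻¹' Ioc 0 θ = Ico 0 θ := by
      ext t; simp only [mem_preimage, mem_Ioc, mem_Ico]
      constructor <;> rintro ⟨a, b⟩ <;> constructor <;> linarith
    rw [← hsubst, hpre, setLIntegral_congr Ico_ae_eq_Ioc, ← Mhalf hq hθ.le]
    refine le_of_eq (setLIntegral_congr_fun measurableSet_Ioc (fun t ht => ?_))
    congr 1
    rw [show θ - t - θ = -t by ring, abs_neg]
  have h2 : ∫⁻ σ in Ioc θ (2*θ), ENNReal.ofReal (|σ - θ| ^ q)
      = ENNReal.ofReal (θ ^ (q+1) / (q+1)) := by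
    have hsubst := (measurePreserving_add_right volume θ).setLIntegral_comp_preimage_emb
      (MeasurableEquiv.addRight θ).measurableEmbedding
      (fun σ => ENNReal.ofReal (|σ - θ| ^ q)) (Ioc θ (2*θ))
    have hpre : (fun t : ℝ => t + θ) ⁻¹' Ioc θ (2*θ) = Ioc 0 θ := by
      ext t; simp only [mem_preimage, mem_Ioc]
      constructor <;> rintro ⟨a, b⟩ <;> constructor <;> linarith
    rw [← hsubst, hpre, ← Mhalf hq hθ.le]
    refine setLIntegral_congr_fun measurableSet_Ioc (fun t ht => ?_)
    congr 1
    rw [show t + θ - θ = t by ring]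
  calc ∫⁻ σ in Ioc (θ/2) (2*θ), ENNReal.ofReal (|σ - θ| ^ q)
      ≤ (∫⁻ σ in Ioc (θ/2) θ, ENNReal.ofReal (|σ - θ| ^ q))
        + ∫⁻ σ in Ioc θ (2*θ), ENNReal.ofReal (|σ - θ| ^ q) := by
        rw [hsub]; exact lintegral_union_le _ _ _
    _ ≤ ENNReal.ofReal (θ ^ (q+1) / (q+1)) + ENNReal.ofReal (θ ^ (q+1) / (q+1)) := by
        exact add_le_add h1 h2.le
    _ = ENNReal.ofReal (2 * (θ ^ (q+1) / (q+1))) := by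
        rw [← ENNReal.ofReal_add hnn hnn]; ring_nf
lemma SIGMA {H : ℝ} (h1 : 1/2 < H) (h2 : H < 1) {θ : ℝ} (hθ : 0 < θ) :
    ∫⁻ σ in Ioi (0:ℝ), ENNReal.ofReal (σ ^ (-H) * |σ - θ| ^ (2*H-2))
      ≤ ENNReal.ofReal ((4/(1-H) + 4/(2*H-1)) * θ ^ (H-1)) := by
  have hθ2 : (0:ℝ) < θ/2 := by linarith
  have ht : (0:ℝ) ≤ θ ^ (H-1) := rpow_nonneg hθ.le _
  have hsplit : Ioi (0:ℝ) = (Ioc 0 (θ/2) ∪ Ioc (θ/2) (2*θ)) ∪ Ioi (2*θ) := by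
    rw [Ioc_union_Ioc_eq_Ioc (by linarith) (by linarith),
      Ioc_union_Ioi_eq_Ioi (by linarith)]
  -- Region 1
  have B1 : ∫⁻ σ in Ioc (0:ℝ) (θ/2), ENNReal.ofReal (σ ^ (-H) * |σ - θ| ^ (2*H-2))
      ≤ ENNReal.ofReal (2/(1-H) * θ ^ (H-1)) := by
    have step1 : ∫⁻ σ in Ioc (0:ℝ) (θ/2), ENNReal.ofReal (σ ^ (-H) * |σ - θ| ^ (2*H-2))
        ≤ ∫⁻ σ in Ioc (0:ℝ) (θ/2), ENNReal.ofReal ((θ/2) ^ (2*H-2) * σ ^ (-H)) := by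
      refine setLIntegral_mono (by fun_prop) fun σ hσ => ?_
      refine ENNReal.ofReal_le_ofReal ?_
      rw [mul_comm ((θ/2) ^ (2*H-2))]
      refine mul_le_mul_of_nonneg_left ?_ (rpow_nonneg hσ.1.le _)
      rw [abs_of_neg (by nlinarith [hσ.2] : σ - θ < 0), show -(σ - θ) = θ - σ by ring]
      have hle : θ/2 ≤ θ - σ := by linarith [hσ.2]
      exact rpow_le_rpow_of_nonpos hθ2 hle (by linarith)
    refine step1.trans ?_
    simp_rw [ENNReal.ofReal_mul (rpow_nonneg hθ2.le _)]
    rw [lintegral_const_mul _ (by fun_prop), L1 (by linarith) hθ2.le,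
      ← ENNReal.ofReal_mul (rpow_nonneg hθ2.le _)]
    refine ENNReal.ofReal_le_ofReal ?_
    have e1 : (θ/2) ^ (2*H-2) * (θ/2) ^ (-H+1) = (θ/2) ^ (H-1) := by
      rw [← rpow_add hθ2]; ring_nf
    have e2 : (θ/2) ^ (H-1) ≤ 2 * θ ^ (H-1) := by
      rw [div_rpow hθ.le (by norm_num : (0:ℝ) ≤ 2)]
      have h3 : (2:ℝ) ^ (-1:ℝ) ≤ 2 ^ (H-1) :=
        rpow_le_rpow_of_exponent_le (by norm_num) (by linarith)
      rw [rpow_neg_one] at h3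
      have h4 : (0:ℝ) < 2 ^ (H-1) := rpow_pos_of_pos (by norm_num) _
      rw [div_le_iff₀ h4]
      nlinarith
    have h5 : (0:ℝ) < -H+1 := by linarith
    rw [← mul_div_assoc, e1,
      show 2/(1-H) * θ ^ (H-1) = (2 * θ ^ (H-1))/(-H+1) by
        rw [show -H+1 = 1-H by ring]; ring]
    exact div_le_div_of_nonneg_right e2 h5.le
  -- Region 2
  have B2 : ∫⁻ σ in Ioc (θ/2) (2*θ), ENNReal.ofReal (σ ^ (-H) * |σ - θ| ^ (2*H-2))
      ≤ ENNReal.ofReal (4/(2*H-1) * θ ^ (H-1)) := by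
    have step1 : ∫⁻ σ in Ioc (θ/2) (2*θ), ENNReal.ofReal (σ ^ (-H) * |σ - θ| ^ (2*H-2))
        ≤ ∫⁻ σ in Ioc (θ/2) (2*θ), ENNReal.ofReal ((θ/2) ^ (-H) * |σ - θ| ^ (2*H-2)) := by
      refine setLIntegral_mono (by fun_prop) fun σ hσ => ?_
      refine ENNReal.ofReal_le_ofReal ?_
      exact mul_le_mul_of_nonneg_right
        (rpow_le_rpow_of_nonpos hθ2 hσ.1.le (by linarith)) (rpow_nonneg (abs_nonneg _) _)
    refine step1.trans ?_
    simp_rw [ENNReal.ofReal_mul (rpow_nonneg hθ2.le _)]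
    rw [lintegral_const_mul _ (by fun_prop)]
    refine le_trans (mul_le_mul_right (Mmid (by linarith) hθ) _) ?_
    rw [← ENNReal.ofReal_mul (rpow_nonneg hθ2.le _)]
    refine ENNReal.ofReal_le_ofReal ?_
    have e1 : (θ/2) ^ (-H) ≤ 2 * θ ^ (-H) := by
      rw [div_rpow hθ.le (by norm_num : (0:ℝ) ≤ 2)]
      have h3 : (2:ℝ) ^ (-1:ℝ) ≤ 2 ^ (-H) :=
        rpow_le_rpow_of_exponent_le (by norm_num) (by linarith)
      rw [rpow_neg_one] at h3
      have h4 : (0:ℝ) < 2 ^ (-H) := rpow_pos_of_pos (by norm_num) _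
      rw [div_le_iff₀ h4]
      nlinarith [rpow_nonneg hθ.le (-H)]
    have e2 : θ ^ (-H) * θ ^ (2*H-2+1) = θ ^ (H-1) := by
      rw [← rpow_add hθ]; ring_nf
    have h6 : (0:ℝ) < 2*H-2+1 := by linarith
    have h7 : (0:ℝ) ≤ θ ^ (2*H-2+1) := rpow_nonneg hθ.le _
    have h8 : (0:ℝ) ≤ θ ^ (-H) := rpow_nonneg hθ.le _
    calc (θ/2) ^ (-H) * (2 * (θ ^ (2*H-2+1) / (2*H-2+1)))
        ≤ 2 * θ ^ (-H) * (2 * (θ ^ (2*H-2+1) / (2*H-2+1))) := by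
          refine mul_le_mul_of_nonneg_right e1 ?_
          positivity
      _ = 4 * (θ ^ (-H) * θ ^ (2*H-2+1)) / (2*H-2+1) := by ring
      _ = 4/(2*H-1) * θ ^ (H-1) := by rw [e2]; ring_nf
  -- Region 3
  have B3 : ∫⁻ σ in Ioi (2*θ), ENNReal.ofReal (σ ^ (-H) * |σ - θ| ^ (2*H-2))
      ≤ ENNReal.ofReal (2/(1-H) * θ ^ (H-1)) := by
    have step1 : ∫⁻ σ in Ioi (2*θ), ENNReal.ofReal (σ ^ (-H) * |σ - θ| ^ (2*H-2))
        ≤ ∫⁻ σ in Ioi (2*θ), ENNReal.ofReal ((2:ℝ) ^ (2-2*H) * σ ^ (H-2)) := by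
      refine setLIntegral_mono (by fun_prop) fun σ hσ => ?_
      simp only [mem_Ioi] at hσ
      have hσ0 : (0:ℝ) < σ := by linarith
      refine ENNReal.ofReal_le_ofReal ?_
      have hbd : |σ - θ| ^ (2*H-2) ≤ (σ/2) ^ (2*H-2) := by
        rw [abs_of_pos (by linarith : (0:ℝ) < σ - θ)]
        exact rpow_le_rpow_of_nonpos (by linarith) (by linarith) (by linarith)
      calc σ ^ (-H) * |σ - θ| ^ (2*H-2)
          ≤ σ ^ (-H) * (σ/2) ^ (2*H-2) :=
            mul_le_mul_of_nonneg_left hbd (rpow_nonneg hσ0.le _)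
        _ = (2:ℝ) ^ (2-2*H) * σ ^ (H-2) := by
            rw [div_rpow hσ0.le (by norm_num : (0:ℝ) ≤ 2), div_eq_mul_inv,
              ← rpow_neg (by norm_num : (0:ℝ) ≤ 2), show -(2*H-2) = 2-2*H by ring,
              mul_comm (σ ^ (2*H-2)), ← mul_assoc, mul_comm (σ ^ (-H)), mul_assoc,
              ← rpow_add hσ0, show -H + (2*H-2) = H-2 by ring]
    refine step1.trans ?_
    simp_rw [ENNReal.ofReal_mul (rpow_nonneg (by norm_num : (0:ℝ) ≤ 2) _)]
    rw [lintegral_const_mul _ (by fun_prop), L2 (by linarith) (by linarith : (0:ℝ) < 2*θ),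
      ← ENNReal.ofReal_mul (rpow_nonneg (by norm_num : (0:ℝ) ≤ 2) _)]
    refine ENNReal.ofReal_le_ofReal ?_
    have e1 : (2*θ) ^ (H-2+1) ≤ θ ^ (H-1) := by
      rw [show H-2+1 = H-1 by ring, mul_rpow (by norm_num : (0:ℝ) ≤ 2) hθ.le]
      have h3 : (2:ℝ) ^ (H-1) ≤ 2 ^ (0:ℝ) :=
        rpow_le_rpow_of_exponent_le (by norm_num) (by linarith)
      rw [rpow_zero] at h3
      nlinarith [rpow_pos_of_pos (show (0:ℝ) < 2 by norm_num) (H-1)]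
    have e2 : (2:ℝ) ^ (2-2*H) ≤ 2 := by
      have h3 := rpow_le_rpow_of_exponent_le (by norm_num : (1:ℝ) ≤ 2)
        (by linarith : 2-2*H ≤ 1)
      rwa [rpow_one] at h3
    have h10 : (0:ℝ) ≤ (2*θ) ^ (H-2+1) := rpow_nonneg (by linarith) _
    have h11 : (0:ℝ) < (2:ℝ) ^ (2-2*H) := rpow_pos_of_pos (by norm_num) _
    have key : -(2*θ) ^ (H-2+1) / (H-2+1) = (2*θ) ^ (H-2+1) / (1-H) := by
      rw [div_eq_div_iff (by linarith) (by linarith)]; ring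
    rw [key, ← mul_div_assoc,
      show 2/(1-H) * θ ^ (H-1) = (2 * θ ^ (H-1))/(1-H) by ring]
    refine div_le_div_of_nonneg_right ?_ (by linarith)
    nlinarith
  -- combine
  have c1 : (0:ℝ) ≤ 2/(1-H) * θ ^ (H-1) :=
    mul_nonneg (div_nonneg (by norm_num) (by linarith)) ht
  have c2 : (0:ℝ) ≤ 4/(2*H-1) * θ ^ (H-1) :=
    mul_nonneg (div_nonneg (by norm_num) (by linarith)) ht
  rw [hsplit]
  refine le_trans (lintegral_union_le _ _ _) ?_
  refine le_trans (add_le_add_left (lintegral_union_le _ _ _) _) ?_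
  refine le_trans (add_le_add (add_le_add B1 B2) B3) ?_
  rw [← ENNReal.ofReal_add c1 c2, ← ENNReal.ofReal_add (add_nonneg c1 c2) c1]
  exact ENNReal.ofReal_le_ofReal (le_of_eq (by ring))

/-- For `H ∈ (1/2,1)` there is `C > 0` such that for all `0 < r ≤ u`,
`∫₀^u ∫₀^r σ^{-H} |σ-θ|^{2H-2} dθ dσ ≤ C r^{H}`. -/
theorem fbm_kernel_bound_pos (H : ℝ) (hH : H ∈ Set.Ioo (1/2 : ℝ) 1) :
    ∃ C : ℝ, 0 < C ∧ ∀ u r : ℝ, 0 < r → r ≤ u →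
      (∫⁻ σ in Set.Ioc (0:ℝ) u, ∫⁻ θ in Set.Ioc (0:ℝ) r,
          ENNReal.ofReal (σ ^ (-H) * |σ - θ| ^ (2*H - 2)))
        ≤ ENNReal.ofReal (C * r ^ H) := by
  obtain ⟨h1, h2⟩ := hH
  have hH0 : 0 < H := by linarith
  have hK : (0:ℝ) < 4/(1-H) + 4/(2*H-1) :=
    add_pos (div_pos (by norm_num) (by linarith)) (div_pos (by norm_num) (by linarith))
  refine ⟨(4/(1-H) + 4/(2*H-1))/H, div_pos hK hH0, fun u r hr hru => ?_⟩
  have hmeas : Measurable (Function.uncurry fun σ θ : ℝ =>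
      ENNReal.ofReal (σ ^ (-H) * |σ - θ| ^ (2*H-2))) := by fun_prop
  rw [lintegral_lintegral_swap hmeas.aemeasurable]
  have step1 : ∫⁻ θ in Ioc (0:ℝ) r, ∫⁻ σ in Ioc (0:ℝ) u,
        ENNReal.ofReal (σ ^ (-H) * |σ - θ| ^ (2*H-2))
      ≤ ∫⁻ θ in Ioc (0:ℝ) r,
        ENNReal.ofReal ((4/(1-H) + 4/(2*H-1)) * θ ^ (H-1)) := by
    refine setLIntegral_mono' measurableSet_Ioc fun θ hθ => ?_
    refine le_trans (lintegral_mono_set Ioc_subset_Ioi_self) (SIGMA h1 h2 hθ.1)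
  refine step1.trans ?_
  simp_rw [ENNReal.ofReal_mul hK.le]
  rw [lintegral_const_mul _ (by fun_prop), L1 (by linarith : (-1:ℝ) < H-1) hr.le,
    ← ENNReal.ofReal_mul hK.le]
  refine ENNReal.ofReal_le_ofReal (le_of_eq ?_)
  rw [show H-1+1 = H by ring]
  field_simp
end

section
/- For H ∈ (1/2, 1), the double integral defining the variance bound satisfies: there is a constant C_H such that for all t > e, 2H(2H-1) ∫₁^t ∫₁^t (rs)^{-2H} R(s,r) |r-s|^{2H-2} dr ds ≤ C_H log t, where R(s,r) = (1/2)(s^{2H}+r^{2H}-|s-r|^{2H}). -/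
open MeasureTheory Set intervalIntegral

/-- MVT-type bound: `r^p - (r-s)^p ≤ p r^{p-1} s` for `0 ≤ s ≤ r`, `p ≥ 1`. -/
lemma rpow_mvt {p r s : ℝ} (hp : 1 ≤ p) (hs : 0 ≤ s) (hsr : s ≤ r) :
    r ^ p ≤ (r - s) ^ p + p * r ^ (p - 1) * s := by
  have hr : 0 ≤ r := hs.trans hsr
  set f : ℝ → ℝ := fun x => (r - x) ^ p + p * r ^ (p - 1) * x with hf
  have hderiv : ∀ x : ℝ, HasDerivAt f (p * (r - x) ^ (p - 1) * (-1) + p * r ^ (p - 1)) x := by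
    intro x
    have h1 : HasDerivAt (fun x : ℝ => r - x) (-1) x := (hasDerivAt_id x).const_sub r
    have h2 : HasDerivAt (fun y : ℝ => y ^ p) (p * (r - x) ^ (p - 1)) (r - x) :=
      Real.hasDerivAt_rpow_const (Or.inr hp)
    have h3 := h2.comp x h1
    have h4 : HasDerivAt (fun x : ℝ => p * r ^ (p - 1) * x) (p * r ^ (p - 1)) x := by
      simpa using (hasDerivAt_id x).const_mul (p * r ^ (p - 1))
    exact h3.add h4
  have hmono : MonotoneOn f (Icc 0 r) := by
    apply monotoneOn_of_deriv_nonneg (convex_Icc 0 r)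
    · exact (fun x _ => (hderiv x).continuousAt.continuousWithinAt)
    · exact fun x _ => ((hderiv x).differentiableAt).differentiableWithinAt
    · intro x hx
      rw [interior_Icc] at hx
      rw [(hderiv x).deriv]
      have hle : (r - x) ^ (p - 1) ≤ r ^ (p - 1) :=
        Real.rpow_le_rpow (by linarith [hx.2]) (by linarith [hx.1]) (by linarith)
      have hp0 : (0:ℝ) ≤ p := by linarith
      nlinarith
  have h0 : (0:ℝ) ∈ Icc 0 r := ⟨le_refl 0, hr⟩
  have hsm : s ∈ Icc 0 r := ⟨hs, hsr⟩
  have := hmono h0 hsm hs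
  simpa [hf] using this

/-- core covariance bound for `0 < s ≤ r`. -/
lemma core_bound {p r s : ℝ} (hp : 1 ≤ p) (hs : 0 < s) (hsr : s ≤ r) :
    s ^ p + r ^ p - (r - s) ^ p ≤ (1 + p) * (s * r ^ (p - 1)) := by
  have hr : 0 < r := hs.trans_le hsr
  have h1 : s ^ p ≤ s * r ^ (p - 1) := by
    have e : s ^ p = s * s ^ (p - 1) := by
      rw [← Real.rpow_one_add' hs.le (show (1:ℝ)+(p-1) ≠ 0 by intro h; linarith)]
      ring_nf
    rw [e]
    exact mul_le_mul_of_nonneg_left (Real.rpow_le_rpow hs.le hsr (by linarith)) hs.le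
  have h2 := rpow_mvt hp hs.le hsr
  nlinarith [Real.rpow_nonneg hr.le (p-1), hs.le]

/-- Pointwise bound on the integrand, for `1 ≤ s ≤ r`. -/
lemma pt_bound {H r s : ℝ} (hH : H ∈ Set.Ioo (1/2 : ℝ) 1) (hs : 0 < s) (hsr : s ≤ r) :
    (r * s) ^ (-(2*H)) * ((1/2 : ℝ) * (s ^ (2*H) + r ^ (2*H) - |s - r| ^ (2*H)))
      * |r - s| ^ (2*H - 2)
    ≤ ((1 + 2*H)/2) * (s ^ (1 - 2*H) * r⁻¹ * (r - s) ^ (2*H - 2)) := by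
  set p := 2*H with hp
  have hp1 : 1 < p := by simp [hp]; linarith [hH.1]
  have hs0 : (0:ℝ) < s := hs
  have hr0 : (0:ℝ) < r := by linarith
  have habs1 : |s - r| = r - s := by rw [abs_sub_comm]; exact abs_of_nonneg (by linarith)
  have habs2 : |r - s| = r - s := abs_of_nonneg (by linarith)
  rw [habs1, habs2]
  have hcore : s ^ p + r ^ p - (r - s) ^ p ≤ (1 + p) * (s * r ^ (p - 1)) :=
    core_bound hp1.le hs0 hsr
  have hd : (0:ℝ) ≤ (r - s) ^ (p - 2) := Real.rpow_nonneg (by linarith) _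
  have hmulpos : (0:ℝ) ≤ (r * s) ^ (-p) := Real.rpow_nonneg (by positivity) _
  have step : (r * s) ^ (-p) * ((1/2 : ℝ) * (s ^ p + r ^ p - (r - s) ^ p))
      ≤ (1 + p)/2 * (s ^ (1 - p) * r⁻¹) := by
    have key : (r * s) ^ (-p) * (s * r ^ (p - 1)) = s ^ (1 - p) * r⁻¹ := by
      rw [Real.mul_rpow hr0.le hs0.le, ← Real.rpow_neg_one r]
      have e1 : r ^ (-p) * r ^ (p-1) = r ^ (-1:ℝ) := by
        rw [← Real.rpow_add hr0]; ring_nf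
      have e2 : s ^ (-p) * s = s ^ (1-p) := by
        nth_rewrite 2 [← Real.rpow_one s]
        rw [← Real.rpow_add hs0]; ring_nf
      calc r ^ (-p) * s ^ (-p) * (s * r ^ (p - 1))
          = (s ^ (-p) * s) * (r ^ (-p) * r ^ (p-1)) := by ring
        _ = s ^ (1-p) * r ^ (-1:ℝ) := by rw [e1, e2]
    calc (r * s) ^ (-p) * ((1/2 : ℝ) * (s ^ p + r ^ p - (r - s) ^ p))
        ≤ (r * s) ^ (-p) * ((1/2) * ((1 + p) * (s * r ^ (p - 1)))) := by
          apply mul_le_mul_of_nonneg_left _ hmulpos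
          linarith
      _ = (1 + p)/2 * ((r * s) ^ (-p) * (s * r ^ (p - 1))) := by ring
      _ = (1 + p)/2 * (s ^ (1 - p) * r⁻¹) := by rw [key]
  calc (r * s) ^ (-p) * ((1/2 : ℝ) * (s ^ p + r ^ p - (r - s) ^ p)) * (r - s) ^ (p - 2)
      ≤ ((1 + p)/2 * (s ^ (1 - p) * r⁻¹)) * (r - s) ^ (p - 2) :=
        mul_le_mul_of_nonneg_right step hd
    _ = ((1 + p)/2) * (s ^ (1 - p) * r⁻¹ * (r - s) ^ (p - 2)) := by ring

lemma lint_zero {b c : ℝ} (hb : 0 ≤ b) (hc : -1 < c) :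
    ∫⁻ x in Ioc (0:ℝ) b, ENNReal.ofReal (x ^ c) = ENNReal.ofReal (b ^ (c+1) / (c+1)) := by
  rw [← MeasureTheory.ofReal_integral_eq_lintegral_ofReal]
  · congr 1
    rw [← intervalIntegral.integral_of_le hb, integral_rpow (Or.inl hc),
      Real.zero_rpow (by linarith : c + 1 ≠ 0)]
    ring
  · exact (intervalIntegrable_rpow' hc).1
  · filter_upwards [ae_restrict_mem measurableSet_Ioc] with x hx
    exact Real.rpow_nonneg hx.1.le _

lemma lint_shiftR {s l c : ℝ} (hl : 0 ≤ l) (hc : -1 < c) :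
    ∫⁻ r in Ioc s (s + l), ENNReal.ofReal ((r - s) ^ c)
      = ENNReal.ofReal (l ^ (c+1) / (c+1)) := by
  rw [← MeasureTheory.ofReal_integral_eq_lintegral_ofReal]
  · congr 1
    rw [← intervalIntegral.integral_of_le (by linarith),
      intervalIntegral.integral_comp_sub_right (fun x => x ^ c) s]
    simp only [sub_self, add_sub_cancel_left]
    rw [integral_rpow (Or.inl hc), Real.zero_rpow (by linarith : c + 1 ≠ 0)]
    ring
  · have := ((intervalIntegrable_rpow' hc (a := 0) (b := l)).comp_sub_right s).1
    simpa [add_comm, IntegrableOn] using this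
  · filter_upwards [ae_restrict_mem measurableSet_Ioc] with x hx
    exact Real.rpow_nonneg (by linarith [hx.1]) _

lemma lint_shiftL {s l c : ℝ} (hl : 0 ≤ l) (hc : -1 < c) :
    ∫⁻ r in Ioc (s - l) s, ENNReal.ofReal ((s - r) ^ c)
      = ENNReal.ofReal (l ^ (c+1) / (c+1)) := by
  rw [← MeasureTheory.ofReal_integral_eq_lintegral_ofReal]
  · congr 1
    rw [← intervalIntegral.integral_of_le (by linarith),
      intervalIntegral.integral_comp_sub_left (fun x => x ^ c) s]
    simp only [sub_self, sub_sub_cancel]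
    rw [integral_rpow (Or.inl hc), Real.zero_rpow (by linarith : c + 1 ≠ 0)]
    ring
  · have := ((intervalIntegrable_rpow' hc (a := 0) (b := l)).comp_sub_left s).2
    simpa [IntegrableOn] using this
  · filter_upwards [ae_restrict_mem measurableSet_Ioc] with x hx
    exact Real.rpow_nonneg (by linarith [hx.2]) _

lemma lint_tail {a b c : ℝ} (ha : 0 < a) (hc : c < -1) :
    ∫⁻ x in Ioc a b, ENNReal.ofReal (x ^ c) ≤ ENNReal.ofReal (a ^ (c+1) / (-(c+1))) := by
  rcases le_or_gt b a with hba | hab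
  · rw [Ioc_eq_empty (by exact fun h => absurd hba (not_le.mpr h))]
    simp
  · rw [← MeasureTheory.ofReal_integral_eq_lintegral_ofReal]
    · apply ENNReal.ofReal_le_ofReal
      have h0 : (0:ℝ) ∉ Set.uIcc a b := by
        rw [Set.uIcc_of_le hab.le]; rintro ⟨h1, -⟩; linarith
      rw [← intervalIntegral.integral_of_le hab.le, integral_rpow (Or.inr ⟨by linarith, h0⟩)]
      have hb : (0:ℝ) ≤ b ^ (c+1) := Real.rpow_nonneg (by linarith) _
      have e : (b ^ (c+1) - a ^ (c+1)) / (c+1) = (a ^ (c+1) - b ^ (c+1)) / (-(c+1)) := by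
        rw [div_neg, ← neg_div, neg_sub]
      rw [e]
      gcongr
      · linarith
      · linarith
    · apply (intervalIntegrable_rpow (μ := volume) (Or.inr ?_)).1
      rw [Set.uIcc_of_le hab.le]; rintro ⟨h1, -⟩; linarith
    · filter_upwards [ae_restrict_mem measurableSet_Ioc] with x hx
      exact Real.rpow_nonneg (by linarith [hx.1]) _

lemma lint_inv {t : ℝ} (ht : 1 ≤ t) :
    ∫⁻ s in Ioc (1:ℝ) t, ENNReal.ofReal s⁻¹ = ENNReal.ofReal (Real.log t) := by
  rw [← MeasureTheory.ofReal_integral_eq_lintegral_ofReal]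
  · congr 1
    have h0 : (0:ℝ) ∉ Set.uIcc (1:ℝ) t := by
      rw [Set.uIcc_of_le ht]; rintro ⟨h1, -⟩; linarith
    rw [← intervalIntegral.integral_of_le ht, integral_inv h0]
    simp
  · have h0 : ∀ x : ℝ, x ∈ Set.uIcc (1:ℝ) t → x ≠ 0 := by
      rw [Set.uIcc_of_le ht]; rintro x ⟨h1, -⟩; intro h; rw [h] at h1; linarith
    have := intervalIntegrable_inv (f := fun x : ℝ => x) (μ := volume) h0
      continuousOn_id
    exact this.1
  · filter_upwards [ae_restrict_mem measurableSet_Ioc] with x hx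
    exact inv_nonneg.mpr (by linarith [hx.1])

lemma pt_bound' {H r s : ℝ} (hH : H ∈ Set.Ioo (1/2 : ℝ) 1) (hr : 0 < r) (hrs : r ≤ s) :
    (r * s) ^ (-(2*H)) * ((1/2 : ℝ) * (s ^ (2*H) + r ^ (2*H) - |s - r| ^ (2*H)))
      * |r - s| ^ (2*H - 2)
    ≤ ((1 + 2*H)/2) * (r ^ (1 - 2*H) * s⁻¹ * (s - r) ^ (2*H - 2)) := by
  have h := pt_bound (s := r) (r := s) hH hr hrs
  rw [mul_comm s r, add_comm (r ^ (2*H)) (s ^ (2*H)), abs_sub_comm s r] at h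
  rw [abs_sub_comm s r]
  exact h

/-- generic piece bound -/
lemma piece_bound {φ g : ℝ → ℝ} {S : Set ℝ} {cst bound : ℝ}
    (hg : Measurable g) (hcst : 0 ≤ cst)
    (hpt : ∀ r ∈ S, φ r ≤ cst * g r)
    (hint : ∫⁻ r in S, ENNReal.ofReal (g r) ≤ ENNReal.ofReal bound) :
    ∫⁻ r in S, ENNReal.ofReal (φ r) ≤ ENNReal.ofReal (cst * bound) := by
  calc ∫⁻ r in S, ENNReal.ofReal (φ r)
      ≤ ∫⁻ r in S, ENNReal.ofReal (cst * g r) := by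
        apply setLIntegral_mono ((hg.const_mul cst).ennreal_ofReal)
        exact fun r hr => ENNReal.ofReal_le_ofReal (hpt r hr)
    _ = ENNReal.ofReal cst * ∫⁻ r in S, ENNReal.ofReal (g r) := by
        simp_rw [ENNReal.ofReal_mul hcst]
        exact lintegral_const_mul _ hg.ennreal_ofReal
    _ ≤ ENNReal.ofReal cst * ENNReal.ofReal bound := mul_le_mul_right hint _
    _ = ENNReal.ofReal (cst * bound) := (ENNReal.ofReal_mul hcst).symm

lemma inner_bound {H t s : ℝ} (hH : H ∈ Set.Ioo (1/2 : ℝ) 1) (hs1 : 1 < s) (hst : s ≤ t) :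
    ∫⁻ r in Ioc (1:ℝ) t, ENNReal.ofReal ((r * s) ^ (-(2*H))
        * ((1/2 : ℝ) * (s ^ (2*H) + r ^ (2*H) - |s - r| ^ (2*H))) * |r - s| ^ (2*H - 2))
      ≤ ENNReal.ofReal ((((1 + 2*H)/2) * (2/(2*H-1) + 2/(2-2*H))) * s⁻¹) := by
  obtain ⟨hH1, hH2⟩ := hH
  have hp1 : 1 < 2*H := by linarith
  have hp2 : 2*H < 2 := by linarith
  have hs0 : (0:ℝ) < s := by linarith
  set p := 2*H with hp
  set c₀ := (1 + p)/2 with hc₀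
  have hc₀0 : 0 ≤ c₀ := by rw [hc₀]; linarith
  have hsinv : 0 ≤ s⁻¹ := inv_nonneg.mpr hs0.le
  -- rpow algebra helpers
  have h2r : ∀ a : ℝ, (0:ℝ) < 2 ^ a := fun a => Real.rpow_pos_of_pos two_pos a
  have hsr : ∀ a : ℝ, (0:ℝ) < s ^ a := fun a => Real.rpow_pos_of_pos hs0 a
  have hs_add : ∀ a b : ℝ, s ^ a * s ^ b = s ^ (a+b) := fun a b => (Real.rpow_add hs0 a b).symm
  have h2_add : ∀ a b : ℝ, (2:ℝ) ^ a * 2 ^ b = 2 ^ (a+b) := fun a b => (Real.rpow_add two_pos a b).symm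
  have hs_neg1 : s ^ (-1:ℝ) = s⁻¹ := Real.rpow_neg_one s
  have hhalf : (s/2) ^ (p-2) = s ^ (p-2) * 2 ^ (2-p) := by
    rw [Real.div_rpow hs0.le two_pos.le, div_eq_mul_inv,
      show (2:ℝ) - p = -(p-2) by ring, Real.rpow_neg two_pos.le]
  have hhalf2 : (s/2) ^ (2-p) = s ^ (2-p) * 2 ^ (p-2) := by
    rw [Real.div_rpow hs0.le two_pos.le, div_eq_mul_inv,
      show (p:ℝ) - 2 = -(2-p) by ring, Real.rpow_neg two_pos.le]
  have hhalf3 : (s/2) ^ (1-p) = s ^ (1-p) * 2 ^ (p-1) := by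
    rw [Real.div_rpow hs0.le two_pos.le, div_eq_mul_inv,
      show (p:ℝ) - 1 = -(1-p) by ring, Real.rpow_neg two_pos.le]
  have hhalf4 : (s/2) ^ (p-1) = s ^ (p-1) * 2 ^ (1-p) := by
    rw [Real.div_rpow hs0.le two_pos.le, div_eq_mul_inv,
      show (1:ℝ) - p = -(p-1) by ring, Real.rpow_neg two_pos.le]
  have h2s : (2*s) ^ (p-2) = 2 ^ (p-2) * s ^ (p-2) := Real.mul_rpow two_pos.le hs0.le
  -- the four pieces
  have pieceA : ∫⁻ r in Ioc (1:ℝ) (s/2), ENNReal.ofReal ((r * s) ^ (-p)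
        * ((1/2 : ℝ) * (s ^ p + r ^ p - |s - r| ^ p)) * |r - s| ^ (p - 2))
      ≤ ENNReal.ofReal (c₀ * s⁻¹ / (2-p)) := by
    have hb : ∫⁻ r in Ioc (1:ℝ) (s/2), ENNReal.ofReal (r ^ (1-p))
        ≤ ENNReal.ofReal ((s/2) ^ (2-p) / (2-p)) := by
      refine le_trans (lintegral_mono_set (show Ioc (1:ℝ) (s/2) ⊆ Ioc (0:ℝ) (s/2) from
        Ioc_subset_Ioc_left (by norm_num))) ?_
      have h := lint_zero (b := s/2) (c := 1-p) (by positivity)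
        (show (-1:ℝ) < 1-p by linarith)
      rw [show (1:ℝ)-p+1 = 2-p by ring] at h
      exact le_of_eq h
    have hpt : ∀ r ∈ Ioc (1:ℝ) (s/2), (r * s) ^ (-p)
        * ((1/2 : ℝ) * (s ^ p + r ^ p - |s - r| ^ p)) * |r - s| ^ (p - 2)
        ≤ (c₀ * (2 ^ (2-p) * s ^ (p-3))) * r ^ (1-p) := by
      intro r hr
      have hr0 : (0:ℝ) < r := lt_trans one_pos hr.1
      have hrs : r ≤ s := le_trans hr.2 (by linarith)
      refine (pt_bound' ⟨hH1, hH2⟩ hr0 hrs).trans ?_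
      have hd : (s - r) ^ (p-2) ≤ (s/2) ^ (p-2) :=
        Real.rpow_le_rpow_of_nonpos (by linarith) (by linarith [hr.2]) (by linarith)
      have e : (c₀ * (2 ^ (2-p) * s ^ (p-3))) * r ^ (1-p)
          = c₀ * (r ^ (1-p) * s⁻¹ * (s/2) ^ (p-2)) := by
        rw [hhalf]
        have : s⁻¹ * s ^ (p-2) = s ^ (p-3) := by
          rw [← hs_neg1, hs_add]; congr 1; ring
        rw [← this]; ring
      rw [e]
      have hmul : (r ^ (1-p) * s⁻¹) * (s - r) ^ (p-2)
          ≤ (r ^ (1-p) * s⁻¹) * (s/2) ^ (p-2) :=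
        mul_le_mul_of_nonneg_left hd (mul_nonneg (Real.rpow_nonneg hr0.le _) hsinv)
      calc c₀ * (r ^ (1-p) * s⁻¹ * (s - r) ^ (p-2))
          = c₀ * ((r ^ (1-p) * s⁻¹) * (s - r) ^ (p-2)) := by ring
        _ ≤ c₀ * ((r ^ (1-p) * s⁻¹) * (s/2) ^ (p-2)) :=
            mul_le_mul_of_nonneg_left hmul hc₀0
        _ = c₀ * (r ^ (1-p) * s⁻¹ * (s/2) ^ (p-2)) := by ring
    refine (piece_bound (by fun_prop) ?_ hpt hb).trans (le_of_eq (congrArg ENNReal.ofReal ?_))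
    · positivity
    · 
      rw [hhalf2]
      have e1 : s ^ (p-3) * s ^ (2-p) = s⁻¹ := by
        rw [hs_add, show p-3+(2-p) = (-1:ℝ) by ring, hs_neg1]
      have e2 : (2:ℝ) ^ (2-p) * 2 ^ (p-2) = 1 := by
        rw [h2_add, show (2:ℝ)-p+(p-2) = 0 by ring, Real.rpow_zero]
      calc c₀ * (2 ^ (2-p) * s ^ (p-3)) * (s ^ (2-p) * 2 ^ (p-2) / (2-p))
          = c₀ * (s ^ (p-3) * s ^ (2-p)) * (2 ^ (2-p) * 2 ^ (p-2)) / (2-p) := by ring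
        _ = c₀ * s⁻¹ / (2-p) := by rw [e1, e2]; ring
  have pieceB : ∫⁻ r in Ioc (s/2) s, ENNReal.ofReal ((r * s) ^ (-p)
        * ((1/2 : ℝ) * (s ^ p + r ^ p - |s - r| ^ p)) * |r - s| ^ (p - 2))
      ≤ ENNReal.ofReal (c₀ * s⁻¹ / (p-1)) := by
    have hb : ∫⁻ r in Ioc (s/2) s, ENNReal.ofReal ((s - r) ^ (p-2))
        ≤ ENNReal.ofReal ((s/2) ^ (p-1) / (p-1)) := by
      have h := lint_shiftL (s := s) (l := s/2) (c := p-2) (by linarith) (by linarith)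
      rw [show s - s/2 = s/2 by ring, show p-2+1 = p-1 by ring] at h
      exact le_of_eq h
    have hpt : ∀ r ∈ Ioc (s/2) s, (r * s) ^ (-p)
        * ((1/2 : ℝ) * (s ^ p + r ^ p - |s - r| ^ p)) * |r - s| ^ (p - 2)
        ≤ (c₀ * (2 ^ (p-1) * s ^ (-p))) * (s - r) ^ (p-2) := by
      intro r hr
      have hr0 : (0:ℝ) < r := lt_trans (by linarith) hr.1
      refine (pt_bound' ⟨hH1, hH2⟩ hr0 hr.2).trans ?_
      have hd : r ^ (1-p) ≤ (s/2) ^ (1-p) :=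
        Real.rpow_le_rpow_of_nonpos (by linarith) hr.1.le (by linarith)
      have e : (c₀ * (2 ^ (p-1) * s ^ (-p))) * (s - r) ^ (p-2)
          = c₀ * ((s/2) ^ (1-p) * s⁻¹ * (s - r) ^ (p-2)) := by
        rw [hhalf3]
        have : s ^ (1-p) * s⁻¹ = s ^ (-p) := by
          rw [← hs_neg1, hs_add]; congr 1; ring
        rw [← this]; ring
      rw [e]
      have hnn : (0:ℝ) ≤ s⁻¹ * (s - r) ^ (p-2) :=
        mul_nonneg hsinv (Real.rpow_nonneg (by linarith [hr.2]) _)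
      calc c₀ * (r ^ (1-p) * s⁻¹ * (s - r) ^ (p-2))
          = c₀ * (r ^ (1-p) * (s⁻¹ * (s - r) ^ (p-2))) := by ring
        _ ≤ c₀ * ((s/2) ^ (1-p) * (s⁻¹ * (s - r) ^ (p-2))) :=
            mul_le_mul_of_nonneg_left (mul_le_mul_of_nonneg_right hd hnn) hc₀0
        _ = c₀ * ((s/2) ^ (1-p) * s⁻¹ * (s - r) ^ (p-2)) := by ring
    refine (piece_bound (by fun_prop) ?_ hpt hb).trans (le_of_eq (congrArg ENNReal.ofReal ?_))
    · positivity
    · 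
      rw [hhalf4]
      have e1 : s ^ (-p) * s ^ (p-1) = s⁻¹ := by
        rw [hs_add, show -p+(p-1) = (-1:ℝ) by ring, hs_neg1]
      have e2 : (2:ℝ) ^ (p-1) * 2 ^ (1-p) = 1 := by
        rw [h2_add, show (p:ℝ)-1+(1-p) = 0 by ring, Real.rpow_zero]
      calc c₀ * (2 ^ (p-1) * s ^ (-p)) * (s ^ (p-1) * 2 ^ (1-p) / (p-1))
          = c₀ * (s ^ (-p) * s ^ (p-1)) * (2 ^ (p-1) * 2 ^ (1-p)) / (p-1) := by ring
        _ = c₀ * s⁻¹ / (p-1) := by rw [e1, e2]; ring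
  have pieceC : ∫⁻ r in Ioc s (2*s), ENNReal.ofReal ((r * s) ^ (-p)
        * ((1/2 : ℝ) * (s ^ p + r ^ p - |s - r| ^ p)) * |r - s| ^ (p - 2))
      ≤ ENNReal.ofReal (c₀ * s⁻¹ / (p-1)) := by
    have hb : ∫⁻ r in Ioc s (2*s), ENNReal.ofReal ((r - s) ^ (p-2))
        ≤ ENNReal.ofReal (s ^ (p-1) / (p-1)) := by
      have h := lint_shiftR (s := s) (l := s) (c := p-2) hs0.le (by linarith)
      rw [show s + s = 2*s by ring, show p-2+1 = p-1 by ring] at h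
      exact le_of_eq h
    have hpt : ∀ r ∈ Ioc s (2*s), (r * s) ^ (-p)
        * ((1/2 : ℝ) * (s ^ p + r ^ p - |s - r| ^ p)) * |r - s| ^ (p - 2)
        ≤ (c₀ * (s ^ (1-p) * s⁻¹)) * (r - s) ^ (p-2) := by
      intro r hr
      refine (pt_bound ⟨hH1, hH2⟩ hs0 hr.1.le).trans ?_
      have hd : r⁻¹ ≤ s⁻¹ := by
        apply inv_anti₀ hs0 hr.1.le
      have hnn : (0:ℝ) ≤ s ^ (1-p) := (hsr _).le
      have hnn2 : (0:ℝ) ≤ (r - s) ^ (p-2) := Real.rpow_nonneg (by linarith [hr.1]) _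
      calc c₀ * (s ^ (1-p) * r⁻¹ * (r - s) ^ (p-2))
          ≤ c₀ * (s ^ (1-p) * s⁻¹ * (r - s) ^ (p-2)) := by
            apply mul_le_mul_of_nonneg_left _ hc₀0
            apply mul_le_mul_of_nonneg_right _ hnn2
            exact mul_le_mul_of_nonneg_left hd hnn
        _ = (c₀ * (s ^ (1-p) * s⁻¹)) * (r - s) ^ (p-2) := by ring
    refine (piece_bound (by fun_prop) ?_ hpt hb).trans (le_of_eq (congrArg ENNReal.ofReal ?_))
    · positivity
    · 
      have e1 : s ^ (1-p) * s ^ (p-1) = 1 := by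
        rw [hs_add, show (1:ℝ)-p+(p-1) = 0 by ring, Real.rpow_zero]
      calc c₀ * (s ^ (1-p) * s⁻¹) * (s ^ (p-1) / (p-1))
          = c₀ * (s ^ (1-p) * s ^ (p-1)) * s⁻¹ / (p-1) := by ring
        _ = c₀ * s⁻¹ / (p-1) := by rw [e1]; ring
  have pieceD : ∫⁻ r in Ioc (2*s) t, ENNReal.ofReal ((r * s) ^ (-p)
        * ((1/2 : ℝ) * (s ^ p + r ^ p - |s - r| ^ p)) * |r - s| ^ (p - 2))
      ≤ ENNReal.ofReal (c₀ * s⁻¹ / (2-p)) := by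
    have hb : ∫⁻ r in Ioc (2*s) t, ENNReal.ofReal (r ^ (p-3))
        ≤ ENNReal.ofReal ((2*s) ^ (p-2) / (2-p)) := by
      have h := lint_tail (a := 2*s) (b := t) (c := p-3) (by linarith)
        (show p-3 < -1 by linarith)
      rw [show p-3+1 = p-2 by ring, show -(p-2) = 2-p by ring] at h
      exact h
    have hpt : ∀ r ∈ Ioc (2*s) t, (r * s) ^ (-p)
        * ((1/2 : ℝ) * (s ^ p + r ^ p - |s - r| ^ p)) * |r - s| ^ (p - 2)
        ≤ (c₀ * (2 ^ (2-p) * s ^ (1-p))) * r ^ (p-3) := by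
      intro r hr
      have hr0 : (0:ℝ) < r := by have := hr.1; linarith
      refine (pt_bound ⟨hH1, hH2⟩ hs0 (by linarith [hr.1])).trans ?_
      have hd : (r - s) ^ (p-2) ≤ (r/2) ^ (p-2) :=
        Real.rpow_le_rpow_of_nonpos (by linarith) (by linarith [hr.1]) (by linarith)
      have hrhalf : (r/2) ^ (p-2) = r ^ (p-2) * 2 ^ (2-p) := by
        rw [Real.div_rpow hr0.le two_pos.le, div_eq_mul_inv,
          show (2:ℝ) - p = -(p-2) by ring, Real.rpow_neg two_pos.le]
      have e2 : r⁻¹ * r ^ (p-2) = r ^ (p-3) := by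
        rw [← Real.rpow_neg_one r, ← Real.rpow_add hr0]; congr 1; ring
      have e : (c₀ * (2 ^ (2-p) * s ^ (1-p))) * r ^ (p-3)
          = c₀ * (s ^ (1-p) * (r⁻¹ * (r/2) ^ (p-2))) := by
        rw [hrhalf, ← e2]; ring
      rw [e]
      have hmul : (r - s) ^ (p-2) * (s ^ (1-p) * r⁻¹)
          ≤ (r/2) ^ (p-2) * (s ^ (1-p) * r⁻¹) :=
        mul_le_mul_of_nonneg_right hd
          (mul_nonneg (Real.rpow_nonneg hs0.le _) (inv_nonneg.mpr hr0.le))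
      calc c₀ * (s ^ (1-p) * r⁻¹ * (r - s) ^ (p-2))
          = c₀ * ((r - s) ^ (p-2) * (s ^ (1-p) * r⁻¹)) := by ring
        _ ≤ c₀ * ((r/2) ^ (p-2) * (s ^ (1-p) * r⁻¹)) :=
            mul_le_mul_of_nonneg_left hmul hc₀0
        _ = c₀ * (s ^ (1-p) * (r⁻¹ * (r/2) ^ (p-2))) := by ring
    refine (piece_bound (by fun_prop) ?_ hpt hb).trans (le_of_eq (congrArg ENNReal.ofReal ?_))
    · positivity
    ·
      rw [h2s]
      have e1 : s ^ (1-p) * s ^ (p-2) = s⁻¹ := by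
        rw [hs_add, show (1:ℝ)-p+(p-2) = -1 by ring, hs_neg1]
      have e2 : (2:ℝ) ^ (2-p) * 2 ^ (p-2) = 1 := by
        rw [h2_add, show (2:ℝ)-p+(p-2) = 0 by ring, Real.rpow_zero]
      calc c₀ * (2 ^ (2-p) * s ^ (1-p)) * (2 ^ (p-2) * s ^ (p-2) / (2-p))
          = c₀ * (s ^ (1-p) * s ^ (p-2)) * (2 ^ (2-p) * 2 ^ (p-2)) / (2-p) := by ring
        _ = c₀ * s⁻¹ / (2-p) := by rw [e1, e2]; ring
  have hsubset : Ioc (1:ℝ) t ⊆ (Ioc 1 (s/2) ∪ Ioc (s/2) s) ∪ (Ioc s (2*s) ∪ Ioc (2*s) t) := by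
    intro r hr
    rcases le_or_gt r (s/2) with h | h
    · exact Or.inl (Or.inl ⟨hr.1, h⟩)
    · rcases le_or_gt r s with h2 | h2
      · exact Or.inl (Or.inr ⟨h, h2⟩)
      · rcases le_or_gt r (2*s) with h3 | h3
        · exact Or.inr (Or.inl ⟨h2, h3⟩)
        · exact Or.inr (Or.inr ⟨h3, hr.2⟩)
  have hA0 : (0:ℝ) ≤ c₀ * s⁻¹ / (2-p) :=
    div_nonneg (mul_nonneg hc₀0 hsinv) (by linarith)
  have hB0 : (0:ℝ) ≤ c₀ * s⁻¹ / (p-1) :=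
    div_nonneg (mul_nonneg hc₀0 hsinv) (by linarith)
  calc ∫⁻ r in Ioc (1:ℝ) t, ENNReal.ofReal ((r * s) ^ (-p)
        * ((1/2 : ℝ) * (s ^ p + r ^ p - |s - r| ^ p)) * |r - s| ^ (p - 2))
      ≤ ∫⁻ r in (Ioc 1 (s/2) ∪ Ioc (s/2) s) ∪ (Ioc s (2*s) ∪ Ioc (2*s) t),
          ENNReal.ofReal ((r * s) ^ (-p)
            * ((1/2 : ℝ) * (s ^ p + r ^ p - |s - r| ^ p)) * |r - s| ^ (p - 2)) :=
        lintegral_mono_set hsubset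
    _ ≤ ((∫⁻ r in Ioc (1:ℝ) (s/2), ENNReal.ofReal ((r * s) ^ (-p)
            * ((1/2 : ℝ) * (s ^ p + r ^ p - |s - r| ^ p)) * |r - s| ^ (p - 2)))
          + (∫⁻ r in Ioc (s/2) s, ENNReal.ofReal ((r * s) ^ (-p)
            * ((1/2 : ℝ) * (s ^ p + r ^ p - |s - r| ^ p)) * |r - s| ^ (p - 2))))
        + ((∫⁻ r in Ioc s (2*s), ENNReal.ofReal ((r * s) ^ (-p)
            * ((1/2 : ℝ) * (s ^ p + r ^ p - |s - r| ^ p)) * |r - s| ^ (p - 2)))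
          + (∫⁻ r in Ioc (2*s) t, ENNReal.ofReal ((r * s) ^ (-p)
            * ((1/2 : ℝ) * (s ^ p + r ^ p - |s - r| ^ p)) * |r - s| ^ (p - 2)))) :=
        le_trans (lintegral_union_le _ _ _)
          (add_le_add (lintegral_union_le _ _ _) (lintegral_union_le _ _ _))
    _ ≤ (ENNReal.ofReal (c₀ * s⁻¹ / (2-p)) + ENNReal.ofReal (c₀ * s⁻¹ / (p-1)))
        + (ENNReal.ofReal (c₀ * s⁻¹ / (p-1)) + ENNReal.ofReal (c₀ * s⁻¹ / (2-p))) :=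
        add_le_add (add_le_add pieceA pieceB) (add_le_add pieceC pieceD)
    _ = ENNReal.ofReal ((c₀ * s⁻¹ / (2-p) + c₀ * s⁻¹ / (p-1))
          + (c₀ * s⁻¹ / (p-1) + c₀ * s⁻¹ / (2-p))) := by
        rw [ENNReal.ofReal_add (add_nonneg hA0 hB0) (add_nonneg hB0 hA0),
          ENNReal.ofReal_add hA0 hB0, ENNReal.ofReal_add hB0 hA0]
    _ ≤ ENNReal.ofReal ((c₀ * (2/(p-1) + 2/(2-p))) * s⁻¹) := by
        apply ENNReal.ofReal_le_ofReal (le_of_eq ?_)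
        ring

/-- For `H ∈ (1/2,1)` there is a constant `C_H` such that for `t ≥ e`,
`2H(2H-1) ∫₁^t ∫₁^t (rs)^{-2H} R(s,r) |r-s|^{2H-2} dr ds ≤ C_H log t`,
where `R(s,r) = (1/2)(s^{2H}+r^{2H}-|s-r|^{2H})`. -/
theorem fbm_variance_log_bound (H : ℝ) (hH : H ∈ Set.Ioo (1/2 : ℝ) 1) :
    ∃ C : ℝ, 0 < C ∧ ∀ t : ℝ, Real.exp 1 ≤ t →
      ENNReal.ofReal (2 * H * (2*H - 1)) *
        (∫⁻ s in Set.Ioc (1:ℝ) t, ∫⁻ r in Set.Ioc (1:ℝ) t,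
            ENNReal.ofReal ((r * s) ^ (-(2*H))
              * ((1/2 : ℝ) * (s ^ (2*H) + r ^ (2*H) - |s - r| ^ (2*H)))
              * |r - s| ^ (2*H - 2)))
        ≤ ENNReal.ofReal (C * Real.log t) := by
  obtain ⟨hH1, hH2⟩ := hH
  have hK0 : 0 < ((1 + 2*H)/2) * (2/(2*H-1) + 2/(2-2*H)) :=
    mul_pos (by linarith)
      (add_pos (div_pos two_pos (by linarith)) (div_pos two_pos (by linarith)))
  have hco : 0 < 2 * H * (2*H - 1) := by nlinarith
  refine ⟨2 * H * (2*H - 1) * (((1 + 2*H)/2) * (2/(2*H-1) + 2/(2-2*H))) + 1,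
    by nlinarith, ?_⟩
  intro t ht
  have ht1 : 1 < t := by
    have := Real.exp_one_gt_d9; linarith
  have hlog1 : 1 ≤ Real.log t := by
    calc (1:ℝ) = Real.log (Real.exp 1) := (Real.log_exp 1).symm
      _ ≤ Real.log t := Real.log_le_log (Real.exp_pos 1) ht
  have key : (∫⁻ s in Set.Ioc (1:ℝ) t, ∫⁻ r in Set.Ioc (1:ℝ) t,
        ENNReal.ofReal ((r * s) ^ (-(2*H))
          * ((1/2 : ℝ) * (s ^ (2*H) + r ^ (2*H) - |s - r| ^ (2*H)))
          * |r - s| ^ (2*H - 2)))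
      ≤ ENNReal.ofReal ((((1 + 2*H)/2) * (2/(2*H-1) + 2/(2-2*H))) * Real.log t) := by
    calc (∫⁻ s in Set.Ioc (1:ℝ) t, ∫⁻ r in Set.Ioc (1:ℝ) t,
          ENNReal.ofReal ((r * s) ^ (-(2*H))
            * ((1/2 : ℝ) * (s ^ (2*H) + r ^ (2*H) - |s - r| ^ (2*H)))
            * |r - s| ^ (2*H - 2)))
        ≤ ∫⁻ s in Set.Ioc (1:ℝ) t,
            ENNReal.ofReal ((((1 + 2*H)/2) * (2/(2*H-1) + 2/(2-2*H))) * s⁻¹) := by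
          apply setLIntegral_mono (by fun_prop)
          intro s hs
          exact inner_bound ⟨hH1, hH2⟩ hs.1 hs.2
      _ = ENNReal.ofReal (((1 + 2*H)/2) * (2/(2*H-1) + 2/(2-2*H)))
            * ∫⁻ s in Set.Ioc (1:ℝ) t, ENNReal.ofReal s⁻¹ := by
          simp_rw [ENNReal.ofReal_mul hK0.le]
          exact lintegral_const_mul _ (by fun_prop)
      _ = ENNReal.ofReal (((1 + 2*H)/2) * (2/(2*H-1) + 2/(2-2*H)))
            * ENNReal.ofReal (Real.log t) := by rw [lint_inv ht1.le]
      _ = ENNReal.ofReal ((((1 + 2*H)/2) * (2/(2*H-1) + 2/(2-2*H))) * Real.log t) :=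
          (ENNReal.ofReal_mul hK0.le).symm
  calc ENNReal.ofReal (2 * H * (2*H - 1)) *
        (∫⁻ s in Set.Ioc (1:ℝ) t, ∫⁻ r in Set.Ioc (1:ℝ) t,
            ENNReal.ofReal ((r * s) ^ (-(2*H))
              * ((1/2 : ℝ) * (s ^ (2*H) + r ^ (2*H) - |s - r| ^ (2*H)))
              * |r - s| ^ (2*H - 2)))
      ≤ ENNReal.ofReal (2 * H * (2*H - 1)) *
          ENNReal.ofReal ((((1 + 2*H)/2) * (2/(2*H-1) + 2/(2-2*H))) * Real.log t) :=
        mul_le_mul_right key _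
    _ = ENNReal.ofReal ((2 * H * (2*H - 1)) *
          ((((1 + 2*H)/2) * (2/(2*H-1) + 2/(2-2*H))) * Real.log t)) :=
        (ENNReal.ofReal_mul hco.le).symm
    _ ≤ ENNReal.ofReal ((2 * H * (2*H - 1) * (((1 + 2*H)/2) * (2/(2*H-1) + 2/(2-2*H))) + 1)
          * Real.log t) := by
        apply ENNReal.ofReal_le_ofReal
        nlinarith
end

section
/- Let H ∈ (1/2, 1) and define ρ(z) = ∫_{1/z}^1 (y^{-2H} R(y,1) - H log(1/y) - H β(y/(1-y))) (1-y)^{2H-2} dy, where R(y,1) = (1/2)(y^{2H} + 1 - (1-y)^{2H}) and β(y) = ∫₀¹(1-x)^{2H-1}(x+y)^{-2H} dx. Then the limit ρ(∞) = ∫₀¹ (y^{-2H} R(y,1) - H log(1/y) - H β(y/(1-y)))(1-y)^{2H-2} dy exists and is finite. -/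
/-!
Each of the three terms of the bracket is `O(y^{1-2H})` on `(0,1)`: the first by Bernoulli's
inequality `(1-y)^{2H} ≥ 1 - 2Hy`, the logarithm because `log x ≤ x^ε/ε`, and
`β(z) ≤ ∫₀¹ (x+z)^{-2H} dx ≤ z^{1-2H}/(2H-1)` with `z = y/(1-y) ≥ y`. So the integrand is dominated
by a multiple of the Beta kernel `y^{1-2H}(1-y)^{2H-2}`, both of whose exponents exceed `-1`.
-/

open MeasureTheory Set

theorem MeasureTheory.StronglyMeasurable.intervalIntegral_prod_right {f : ℝ → ℝ → ℝ}
    (hf : StronglyMeasurable (Function.uncurry f)) (a b : ℝ) :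
    StronglyMeasurable fun y => ∫ x in a..b, f y x :=
  (hf.integral_prod_right (ν := volume.restrict (Ioc a b))).sub
    (hf.integral_prod_right (ν := volume.restrict (Ioc b a)))

theorem intervalIntegrable_rpow_mul_one_sub_rpow_left {a : ℝ} (ha : -1 < a) (b : ℝ) :
    IntervalIntegrable (fun x : ℝ => x ^ a * (1 - x) ^ b) volume 0 (1 / 2) := by
  refine (intervalIntegral.intervalIntegrable_rpow' ha).mul_continuousOn ?_
  refine ContinuousOn.rpow_const (by fun_prop) fun x hx => Or.inl ?_
  rw [uIcc_of_le (by norm_num)] at hx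
  linarith [hx.2]

theorem intervalIntegrable_rpow_mul_one_sub_rpow {a b : ℝ} (ha : -1 < a) (hb : -1 < b) :
    IntervalIntegrable (fun x : ℝ => x ^ a * (1 - x) ^ b) volume 0 1 := by
  refine (intervalIntegrable_rpow_mul_one_sub_rpow_left ha b).trans ?_
  have := ((intervalIntegrable_rpow_mul_one_sub_rpow_left hb a).comp_sub_left 1).symm
  convert this using 1 <;> norm_num [mul_comm]

theorem intervalIntegral_one_sub_rpow_mul_add_rpow_neg_le {p q z : ℝ} (hp : 1 < p) (hq : 0 ≤ q)
    (hz : 0 < z) : ∫ x in 0..1, (1 - x) ^ q * (x + z) ^ (-p) ≤ z ^ (1 - p) / (p - 1) := by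
  have hcont : ContinuousOn (fun x : ℝ => (x + z) ^ (-p)) (uIcc 0 1) :=
    ContinuousOn.rpow_const (by fun_prop) fun x hx => Or.inl <| by
      rw [uIcc_of_le zero_le_one] at hx; linarith [hx.1]
  calc ∫ x in 0..1, (1 - x) ^ q * (x + z) ^ (-p)
      ≤ ∫ x in 0..1, (x + z) ^ (-p) := by
        refine intervalIntegral.integral_mono_on zero_le_one ?_ hcont.intervalIntegrable
          fun x hx => mul_le_of_le_one_left (Real.rpow_nonneg (by linarith [hx.1]) _)
            (Real.rpow_le_one (by linarith [hx.2]) (by linarith [hx.1]) hq)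
        refine ContinuousOn.intervalIntegrable (ContinuousOn.mul ?_ hcont)
        exact ContinuousOn.rpow_const (by fun_prop) fun x _ => Or.inr hq
    _ = ((1 + z) ^ (1 - p) - z ^ (1 - p)) / (1 - p) := by
        rw [intervalIntegral.integral_comp_add_right (fun u => u ^ (-p)), zero_add,
          integral_rpow (Or.inr ⟨by linarith, ?_⟩)]
        · ring_nf
        · rw [uIcc_of_le (by linarith)]; exact fun h => hz.not_ge h.1
    _ ≤ z ^ (1 - p) / (p - 1) := by
        rw [← neg_div_neg_eq, neg_sub, neg_sub]
        gcongr
        exact sub_le_self _ (Real.rpow_nonneg (by linarith) _)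

namespace Real

variable {p y : ℝ}

theorem abs_rpow_neg_mul_half_add_one_sub_rpow_le (hp : 1 ≤ p) (hy0 : 0 < y) (hy1 : y ≤ 1) :
    |y ^ (-p) * ((1 / 2 : ℝ) * (y ^ p + 1 - (1 - y) ^ p))| ≤ (1 + p) / 2 * y ^ (1 - p) := by
  have bernoulli : 1 - p * y ≤ (1 - y) ^ p := by
    simpa [← sub_eq_add_neg] using one_add_mul_self_le_rpow_one_add (s := -y) (by linarith) hp
  have hle_one : (1 - y) ^ p ≤ 1 := rpow_le_one (by linarith) (by linarith) (by linarith)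
  have hone_le : 1 ≤ y ^ (1 - p) := one_le_rpow_of_pos_of_le_one_of_nonpos hy0 hy1 (by linarith)
  have hpow : y ^ (-p) * y ^ p = 1 := by rw [← rpow_add hy0]; simp
  have hpow' : y ^ (-p) * y = y ^ (1 - p) := by
    rw [sub_eq_neg_add, rpow_add hy0, rpow_one]
  have hpos : 0 ≤ y ^ (-p) := rpow_nonneg hy0.le _
  rw [abs_of_nonneg (mul_nonneg hpos (by linarith [rpow_nonneg hy0.le p]))]
  calc y ^ (-p) * ((1 / 2 : ℝ) * (y ^ p + 1 - (1 - y) ^ p))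
      ≤ y ^ (-p) * ((1 / 2 : ℝ) * (y ^ p + p * y)) := by gcongr; linarith
    _ = 1 / 2 * (y ^ (-p) * y ^ p) + p / 2 * (y ^ (-p) * y) := by ring
    _ ≤ (1 + p) / 2 * y ^ (1 - p) := by rw [hpow, hpow']; nlinarith

theorem abs_log_one_div_le (hp : 1 < p) (hy0 : 0 < y) (hy1 : y ≤ 1) :
    |log (1 / y)| ≤ y ^ (1 - p) / (p - 1) := by
  rw [abs_of_nonneg (log_nonneg (one_le_one_div hy0 hy1))]
  convert log_le_rpow_div (one_div_pos.2 hy0).le (sub_pos.2 hp) using 2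
  rw [one_div, inv_rpow hy0.le, ← rpow_neg hy0.le, neg_sub]

end Real

theorem abs_intervalIntegral_one_sub_rpow_mul_add_div_rpow_neg_le {p q y : ℝ} (hp : 1 < p)
    (hq : 0 ≤ q) (hy0 : 0 < y) (hy1 : y < 1) :
    |∫ x in 0..1, (1 - x) ^ q * (x + y / (1 - y)) ^ (-p)| ≤ y ^ (1 - p) / (p - 1) := by
  have hz : 0 < y / (1 - y) := div_pos hy0 (by linarith)
  rw [abs_of_nonneg (intervalIntegral.integral_nonneg zero_le_one fun x hx =>
    mul_nonneg (Real.rpow_nonneg (by linarith [hx.2]) _) (Real.rpow_nonneg (by linarith [hx.1]) _))]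
  refine (intervalIntegral_one_sub_rpow_mul_add_rpow_neg_le hp hq hz).trans ?_
  refine div_le_div_of_nonneg_right ?_ (by linarith)
  exact Real.rpow_le_rpow_of_nonpos hy0 (le_div_self hy0.le (by linarith) (by linarith))
    (by linarith)

theorem abs_rho_bracket_le {H y : ℝ} (hH : 1 / 2 < H) (hy : y ∈ Ioo (0 : ℝ) 1) :
    |y ^ (-(2*H)) * ((1/2 : ℝ) * (y ^ (2*H) + 1 - (1 - y) ^ (2*H)))
      - H * Real.log (1/y)
      - H * ∫ x in (0:ℝ)..1, (1 - x) ^ (2*H - 1) * (x + y/(1 - y)) ^ (-(2*H))|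
      ≤ (1/2 + H + 2*H/(2*H-1)) * y ^ (1 - 2*H) := by
  obtain ⟨hy0, hy1⟩ := hy
  have hA := Real.abs_rpow_neg_mul_half_add_one_sub_rpow_le (p := 2*H) (by linarith) hy0 hy1.le
  have hL := Real.abs_log_one_div_le (p := 2*H) (by linarith) hy0 hy1.le
  have hB := abs_intervalIntegral_one_sub_rpow_mul_add_div_rpow_neg_le (p := 2*H) (q := 2*H - 1)
    (by linarith) (by linarith) hy0 hy1
  have hH0 : 0 < H := by linarith
  have triangle (a b c : ℝ) : |a - H * b - H * c| ≤ |a| + H * |b| + H * |c| := by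
    simpa only [abs_mul, abs_of_pos hH0] using
      (abs_sub (a - H * b) (H * c)).trans (add_le_add (abs_sub a (H * b)) le_rfl)
  refine (triangle _ _ _).trans ?_
  calc _ ≤ (1 + 2*H) / 2 * y ^ (1 - 2*H) + H * (y ^ (1 - 2*H) / (2*H - 1))
        + H * (y ^ (1 - 2*H) / (2*H - 1)) := by gcongr
    _ = (1/2 + H + 2*H/(2*H-1)) * y ^ (1 - 2*H) := by ring

/-- For `H ∈ (1/2,1)`, the integral defining `ρ(∞)`, namely
`∫₀¹ (y^{-2H} R(y,1) - H log(1/y) - H β(y/(1-y)))(1-y)^{2H-2} dy`,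
converges absolutely. -/
theorem rho_infty_integrable (H : ℝ) (hH : H ∈ Set.Ioo (1/2 : ℝ) 1) :
    IntegrableOn
      (fun y : ℝ =>
        (y ^ (-(2*H)) * ((1/2 : ℝ) * (y ^ (2*H) + 1 - (1 - y) ^ (2*H)))
          - H * Real.log (1/y)
          - H * ∫ x in (0:ℝ)..1, (1 - x) ^ (2*H - 1) * (x + y/(1 - y)) ^ (-(2*H)))
        * (1 - y) ^ (2*H - 2))
      (Set.Ioo (0:ℝ) 1) := by
  obtain ⟨hH1, hH2⟩ := hH
  have hdom : IntegrableOn (fun y : ℝ => (1/2 + H + 2*H/(2*H-1)) *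
      (y ^ (1 - 2*H) * (1 - y) ^ (2*H - 2))) (Ioo 0 1) :=
    ((intervalIntegrable_iff_integrableOn_Ioo_of_le zero_le_one).1
      (intervalIntegrable_rpow_mul_one_sub_rpow (by linarith) (by linarith))).const_mul _
  have hβ : Measurable fun y : ℝ =>
      ∫ x in (0:ℝ)..1, (1 - x) ^ (2*H - 1) * (x + y/(1 - y)) ^ (-(2*H)) :=
    (StronglyMeasurable.intervalIntegral_prod_right (by fun_prop) 0 1).measurable
  refine hdom.mono' (Measurable.aestronglyMeasurable (by fun_prop)) ?_
  refine (ae_restrict_iff' measurableSet_Ioo).2 (ae_of_all _ fun y hy => ?_)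
  have hpos : 0 ≤ (1 - y) ^ (2*H - 2) := Real.rpow_nonneg (by linarith [hy.2]) _
  rw [norm_mul, Real.norm_eq_abs, Real.norm_of_nonneg hpos]
  exact (mul_le_mul_of_nonneg_right (abs_rho_bracket_le hH1 hy) hpos).trans_eq
    (mul_assoc _ _ _)
end

section
/- Hölder-type inequality for 1/H-variations: for H ∈ (1/2, 1) and finite sequences of complex numbers (a_i), (b_i), |Σ|a_i|^{1/H} − Σ|b_i|^{1/H}| ≤ (1/H)(Σ|a_i − b_i|^{1/H})^H · ((Σ|a_i|^{1/H})^{1−H} + (Σ|b_i|^{1/H})^{1−H}). -/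
open Finset Real

/-- For `0 ≤ y ≤ x` and `1 ≤ p`, `x ^ p - y ^ p ≤ p * (x - y) * x ^ (p - 1)`. -/
lemma rpow_sub_rpow_le_aux {x y p : ℝ} (hy : 0 ≤ y) (hxy : y ≤ x) (hp : 1 ≤ p) :
    x ^ p - y ^ p ≤ p * (x - y) * x ^ (p - 1) := by
  have hx : 0 ≤ x := hy.trans hxy
  rcases eq_or_lt_of_le hx with h0 | h0
  · have hx0 : x = 0 := h0.symm
    have hy0 : y = 0 := le_antisymm (hxy.trans_eq hx0) hy
    simp [hx0, hy0]
  · have hs : (-1 : ℝ) ≤ y / x - 1 := by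
      have : 0 ≤ y / x := div_nonneg hy hx
      linarith
    have hb := one_add_mul_self_le_rpow_one_add hs hp
    have h1 : (1 : ℝ) + (y / x - 1) = y / x := by ring
    rw [h1, Real.div_rpow hy hx] at hb
    have hxp : 0 < x ^ p := Real.rpow_pos_of_pos h0 _
    have h2 : (1 + p * (y / x - 1)) * x ^ p ≤ y ^ p := (le_div_iff₀ hxp).mp hb
    have h3 : (1 + p * (y / x - 1)) * x ^ p = x ^ p + p * (y - x) * x ^ (p - 1) := by
      rw [Real.rpow_sub_one h0.ne']
      field_simp
    rw [h3] at h2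
    linarith

/-- For nonnegative `x, y` and `1 ≤ p`,
`|x ^ p - y ^ p| ≤ p * |x - y| * (x ^ (p - 1) + y ^ (p - 1))`. -/
lemma abs_rpow_sub_rpow_le {x y p : ℝ} (hx : 0 ≤ x) (hy : 0 ≤ y) (hp : 1 ≤ p) :
    |x ^ p - y ^ p| ≤ p * |x - y| * (x ^ (p - 1) + y ^ (p - 1)) := by
  have key : ∀ u v : ℝ, 0 ≤ u → 0 ≤ v → v ≤ u →
      u ^ p - v ^ p ≤ p * |u - v| * (u ^ (p - 1) + v ^ (p - 1)) := by
    intro u v hu hv huv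
    have h1 := rpow_sub_rpow_le_aux hv huv hp
    have h2 : |u - v| = u - v := abs_of_nonneg (by linarith)
    have h3 : 0 ≤ v ^ (p - 1) := Real.rpow_nonneg hv _
    have h4 : 0 ≤ p * (u - v) := mul_nonneg (by linarith) (by linarith)
    rw [h2]
    nlinarith [mul_nonneg h4 h3]
  rcases le_total y x with h | h
  · have := key x y hx hy h
    rw [abs_of_nonneg (sub_nonneg.mpr (Real.rpow_le_rpow hy h (by linarith)))]
    linarith
  · have := key y x hy hx h
    rw [abs_sub_comm, abs_of_nonneg (sub_nonneg.mpr (Real.rpow_le_rpow hx h (by linarith))),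
      abs_sub_comm]
    linarith

/-- Hölder-type inequality for `1/H`-variations of finite complex sequences. -/
theorem variation_holder_inequality
    (H : ℝ) (hH : H ∈ Set.Ioo (1/2 : ℝ) 1) (n : ℕ) (a b : Fin n → ℂ) :
    |∑ i, ‖a i‖ ^ (1/H) - ∑ i, ‖b i‖ ^ (1/H)|
      ≤ (1/H) * (∑ i, ‖a i - b i‖ ^ (1/H)) ^ H
        * ((∑ i, ‖a i‖ ^ (1/H)) ^ (1 - H)
          + (∑ i, ‖b i‖ ^ (1/H)) ^ (1 - H)) := by
  obtain ⟨hH1, hH2⟩ := hH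
  have hH0 : 0 < H := by linarith
  set p : ℝ := 1 / H with hp_def
  have hp1 : 1 ≤ p := by
    rw [hp_def, le_div_iff₀ hH0]; linarith
  have hp0 : 0 ≤ p := by linarith
  set SA : ℝ := ∑ i, ‖a i‖ ^ p with hSA
  set SB : ℝ := ∑ i, ‖b i‖ ^ p with hSB
  set SD : ℝ := ∑ i, ‖a i - b i‖ ^ p with hSD
  have hSA0 : 0 ≤ SA := Finset.sum_nonneg fun i _ => Real.rpow_nonneg (norm_nonneg _) _
  have hSB0 : 0 ≤ SB := Finset.sum_nonneg fun i _ => Real.rpow_nonneg (norm_nonneg _) _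
  have hSD0 : 0 ≤ SD := Finset.sum_nonneg fun i _ => Real.rpow_nonneg (norm_nonneg _) _
  set A : ℝ := SA ^ H with hA
  set B : ℝ := SB ^ H with hB
  set D : ℝ := SD ^ H with hD
  have hA0 : 0 ≤ A := Real.rpow_nonneg hSA0 _
  have hB0 : 0 ≤ B := Real.rpow_nonneg hSB0 _
  have hD0 : 0 ≤ D := Real.rpow_nonneg hSD0 _
  have hHp : H * p = 1 := by rw [hp_def]; field_simp
  have hpow : ∀ S : ℝ, 0 ≤ S → (S ^ H) ^ p = S := by
    intro S hS
    rw [← Real.rpow_mul hS, hHp, Real.rpow_one]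
  have hApow : A ^ p = SA := hpow SA hSA0
  have hBpow : B ^ p = SB := hpow SB hSB0
  have hpow' : ∀ S : ℝ, 0 ≤ S → (S ^ H) ^ (p - 1) = S ^ (1 - H) := by
    intro S hS
    rw [← Real.rpow_mul hS]
    congr 1
    rw [hp_def]
    field_simp
  have hA1 : A ^ (p - 1) = SA ^ (1 - H) := hpow' SA hSA0
  have hB1 : B ^ (p - 1) = SB ^ (1 - H) := hpow' SB hSB0
  -- Minkowski-type bounds
  have mink : ∀ (u v : Fin n → ℂ),
      (∑ i, ‖u i‖ ^ p) ^ H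
        ≤ (∑ i, ‖u i - v i‖ ^ p) ^ H + (∑ i, ‖v i‖ ^ p) ^ H := by
    intro u v
    have hM := Real.Lp_add_le Finset.univ (fun i => ‖u i - v i‖)
      (fun i => ‖v i‖) hp1
    have habs : ∀ (z : ℂ), |‖z‖| = ‖z‖ := fun z =>
      abs_of_nonneg (norm_nonneg z)
    have hstep : (∑ i, ‖u i‖ ^ p) ^ H
        ≤ (∑ i, |‖u i - v i‖ + ‖v i‖| ^ p) ^ H := by
      apply Real.rpow_le_rpow (Finset.sum_nonneg fun i _ =>
        Real.rpow_nonneg (norm_nonneg _) _) _ hH0.le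
      apply Finset.sum_le_sum
      intro i _
      apply Real.rpow_le_rpow (norm_nonneg _) _ hp0
      rw [abs_of_nonneg (add_nonneg (norm_nonneg _) (norm_nonneg _))]
      calc ‖u i‖ = ‖(u i - v i) + v i‖ := by ring_nf
        _ ≤ ‖u i - v i‖ + ‖v i‖ := norm_add_le _ _
    have h1p : 1 / p = H := by rw [hp_def]; field_simp
    rw [h1p] at hM
    exact hstep.trans (by simpa [habs] using hM)
  have hAB : A ≤ D + B := by
    exact mink a b
  have hBA : B ≤ D + A := by
    have := mink b a
    have hsub : ∀ i, ‖b i - a i‖ = ‖a i - b i‖ := fun i =>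
      norm_sub_rev _ _
    simp only [hsub] at this
    exact this
  have habsAB : |A - B| ≤ D := abs_sub_le_iff.mpr ⟨by linarith, by linarith⟩
  -- main estimate
  have hmain := abs_rpow_sub_rpow_le hA0 hB0 hp1
  rw [hApow, hBpow, hA1, hB1] at hmain
  have hfinal : p * |A - B| * (SA ^ (1 - H) + SB ^ (1 - H))
      ≤ p * D * (SA ^ (1 - H) + SB ^ (1 - H)) := by
    apply mul_le_mul_of_nonneg_right _ (add_nonneg (Real.rpow_nonneg hSA0 _)
      (Real.rpow_nonneg hSB0 _))
    exact mul_le_mul_of_nonneg_left habsAB (by linarith)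
  calc |SA - SB| ≤ p * |A - B| * (SA ^ (1 - H) + SB ^ (1 - H)) := hmain
    _ ≤ p * D * (SA ^ (1 - H) + SB ^ (1 - H)) := hfinal
end
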